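/- arXiv:2104.01314 — 7 statements merged into one kernel-verified Lean document; each statement's English description precedes it below -/
import Mathlib

section
/- Assume f is μ_f-strongly convex with μ_f > 0, g* is merely convex (μ_{g*} = 0), and a saddle point of L exists. Run ASGARD+ with τ₀ := 1, β₀ ≥ 0.382‖K‖²/μ_f, τ_{k+1} := (τ_k/2)(√(τ_k² + 4) − τ_k), β_{k+1} := β_k/(1+τ_{k+1}), L_k := ‖K‖²/β_k, m_{k+1} := (L_{k+1}+μ_f)/(L_k+μ_f), η_{k+1} := (1−τ_k)τ_k/(τ_k² + m_{k+1}τ_{k+1}). Then for all k ≥ 1, the gap function satisfies G_{X×Y}(x^k, ỹ^k) ≤ (2‖K‖²/(β₀(k+1)²)) · sup_{x∈X}‖x⁰ − x‖² + (10β₀/(k+3)²) · sup_{y∈Y}‖ẏ − y‖². -/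
/-!
Each iteration adds the two prox inequalities (the `x`-subproblem is `(L_k + μ_f)`-strongly
convex) and absorbs the coupling term `⟪K (x^{k+1} - x̂^k), ỹ - y^{k+1}⟫` by Young's inequality,
which is what `L_k = ‖K‖² / β_k` pays for. Comparing with `z = (1 - τ_{k+1}) x^{k+1} + τ_{k+1} x̃`
gives, by induction, the Lyapunov inequality
`L(x^{k+1}, ỹ) - β_k/2 ‖ỹ - ẏ‖² + (L_k + μ_f) τ_k²/2 ‖x̃ - w^k‖² ≤ L(x̃, ỹ^{k+1}) + τ_k² L_0/2 ‖x̃ - x⁰‖²`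
where `x^{k+1} = (1 - τ_k) x^k + τ_k w^k`: the weights telescope because
`τ_{k+1}² = (1 - τ_{k+1}) τ_k²`, the dual term because `β_{k+1} ≥ (1 - τ_{k+1}) β_k`, and the
momentum error is paid for by the strong convexity of `f` thanks to the choice of `η_{k+1}` and
`τ_{k+1}² L_k ≤ μ_f` (this is where `β₀ ≥ 0.382 ‖K‖² / μ_f` enters). The rates come from
`τ_k ≤ 2 / (k + 2)` and `β_k ≤ 20 β₀ / (k + 4)²`.
-/

open RealInnerProductSpace Set Filter Topology

section InnerProductSpace

variable {E F : Type*} [NormedAddCommGroup E] [InnerProductSpace ℝ E]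
  [NormedAddCommGroup F] [InnerProductSpace ℝ F]

lemma sq_norm_convexComb_sub (t : ℝ) (a b c : E) :
    ‖((1 - t) • a + t • b) - c‖ ^ 2 =
      (1 - t) * ‖a - c‖ ^ 2 + t * ‖b - c‖ ^ 2 - t * (1 - t) * ‖b - a‖ ^ 2 := by
  have h : ((1 - t) • a + t • b) - c = (1 - t) • (a - c) + t • (b - c) := by module
  have hb : b - a = (b - c) - (a - c) := by module
  rw [h, hb]
  simp only [← real_inner_self_eq_norm_sq, inner_add_left, inner_add_right, inner_sub_left,
    inner_sub_right, real_inner_smul_left, real_inner_smul_right, real_inner_comm (a - c)]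
  ring

lemma sq_norm_convexComb_le {t : ℝ} (ht0 : 0 ≤ t) (ht1 : t ≤ 1) (a b : E) :
    ‖(1 - t) • a + t • b‖ ^ 2 ≤ (1 - t) * ‖a‖ ^ 2 + t * ‖b‖ ^ 2 := by
  have h := sq_norm_convexComb_sub t a b 0
  simp only [sub_zero] at h
  rw [h]
  nlinarith [mul_nonneg (mul_nonneg ht0 (sub_nonneg.2 ht1)) (sq_nonneg ‖b - a‖)]

lemma strongConvexOn_inner_add_sq_norm_sub {s : Set E} (hs : Convex ℝ s) (ρ : ℝ) (v c : E) :
    StrongConvexOn s ρ (fun z ↦ ⟪v, z⟫ + ρ / 2 * ‖z - c‖ ^ 2) := by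
  refine ⟨hs, fun a _ b _ r t _ _ hrt ↦ ?_⟩
  obtain rfl : r = 1 - t := by linarith
  simp only [smul_eq_mul, inner_add_right, real_inner_smul_right, sq_norm_convexComb_sub,
    norm_sub_rev a b]
  exact le_of_eq (by ring)

lemma StrongConvexOn.add {s : Set E} {m n : ℝ} {f g : E → ℝ} (hf : StrongConvexOn s m f)
    (hg : StrongConvexOn s n g) : StrongConvexOn s (m + n) (f + g) :=
  (UniformConvexOn.add hf hg).mono fun r ↦ by simp only [Pi.add_apply]; linarith

/-- Let `t ↓ 0` in the strong convexity inequality between the minimiser `x` and `z`. -/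
lemma StrongConvexOn.add_sq_norm_sub_le_of_isMinOn {s : Set E} {m : ℝ} {f : E → ℝ}
    (hf : StrongConvexOn s m f) {x z : E} (hx : x ∈ s) (hmin : IsMinOn f s x) (hz : z ∈ s) :
    f x + m / 2 * ‖z - x‖ ^ 2 ≤ f z := by
  have hnear : ∀ t ∈ Ioc (0 : ℝ) 1, f x + (1 - t) * (m / 2 * ‖z - x‖ ^ 2) ≤ f z := by
    rintro t ⟨ht0, ht1⟩
    have hconv := hf.2 hx hz (sub_nonneg.2 ht1) ht0.le (by ring)
    have hle := isMinOn_iff.1 hmin _ (hf.1 hx hz (sub_nonneg.2 ht1) ht0.le (by ring))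
    simp only [smul_eq_mul, norm_sub_rev x z] at hconv
    nlinarith
  have hlim : Tendsto (fun t : ℝ ↦ f x + (1 - t) * (m / 2 * ‖z - x‖ ^ 2)) (𝓝[>] 0)
      (𝓝 (f x + (1 - 0) * (m / 2 * ‖z - x‖ ^ 2))) :=
    ((continuous_const.add ((continuous_const.sub continuous_id).mul continuous_const)).tendsto
      0).mono_left nhdsWithin_le_nhds
  rw [sub_zero, one_mul] at hlim
  exact le_of_tendsto hlim (Filter.mem_of_superset (Ioo_mem_nhdsGT one_pos)
    fun t ht ↦ hnear t (Ioo_subset_Ioc_self ht))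

lemma StrongConvexOn.prox_add_sq_norm_sub_le {s : Set E} {m ρ : ℝ} {f : E → ℝ}
    (hf : StrongConvexOn s m f) {v c x z : E} (hx : x ∈ s)
    (hmin : IsMinOn (fun w ↦ f w + ⟪v, w⟫ + ρ / 2 * ‖w - c‖ ^ 2) s x) (hz : z ∈ s) :
    f x + ⟪v, x⟫ + ρ / 2 * ‖x - c‖ ^ 2 + (m + ρ) / 2 * ‖z - x‖ ^ 2 ≤
      f z + ⟪v, z⟫ + ρ / 2 * ‖z - c‖ ^ 2 := by
  have hmin' : IsMinOn (fun w ↦ f w + (⟪v, w⟫ + ρ / 2 * ‖w - c‖ ^ 2)) s x := by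
    simpa only [add_assoc] using hmin
  have h := (hf.add (strongConvexOn_inner_add_sq_norm_sub hf.1 ρ v c)).add_sq_norm_sub_le_of_isMinOn
    hx hmin' hz
  simp only [Pi.add_apply] at h
  linarith

lemma real_inner_apply_le_young (K : E →L[ℝ] F) {β : ℝ} (hβ : 0 < β) (v : E) (w : F) :
    ⟪K v, w⟫ ≤ ‖K‖ ^ 2 / β / 2 * ‖v‖ ^ 2 + β / 2 * ‖w‖ ^ 2 := by
  have hCS : ⟪K v, w⟫ ≤ ‖K‖ * ‖v‖ * ‖w‖ :=
    (real_inner_le_norm _ _).trans (mul_le_mul_of_nonneg_right (K.le_opNorm v) (norm_nonneg w))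
  have hsq : ‖K‖ ^ 2 / β / 2 * ‖v‖ ^ 2 + β / 2 * ‖w‖ ^ 2 - ‖K‖ * ‖v‖ * ‖w‖ =
      (‖K‖ * ‖v‖ - β * ‖w‖) ^ 2 / (2 * β) := by
    field_simp
    ring
  have : 0 ≤ (‖K‖ * ‖v‖ - β * ‖w‖) ^ 2 / (2 * β) := by positivity
  linarith

end InnerProductSpace

section Lagrangian

variable {E F : Type*} [NormedAddCommGroup E] [InnerProductSpace ℝ E]
  [NormedAddCommGroup F] [InnerProductSpace ℝ F]

noncomputable def lagrangian (f : E → ℝ) (g : F → ℝ) (K : E →L[ℝ] F) (x : E) (y : F) : ℝ :=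
  f x + ⟪K x, y⟫ - g y

variable {f : E → ℝ} {g : F → ℝ} {Sf : Set E} {Sg : Set F} {K : E →L[ℝ] F}

lemma lagrangian_convexComb_le {μ s : ℝ} (hf : StrongConvexOn Sf μ f) (hg : ConvexOn ℝ Sg g)
    (hs0 : 0 ≤ s) (hs1 : s ≤ 1) {x x' : E} (hx : x ∈ Sf) (hx' : x' ∈ Sf) {y y' : F}
    (hy : y ∈ Sg) (hy' : y' ∈ Sg) :
    lagrangian f g K ((1 - s) • x + s • x') y' ≤
      (1 - s) * lagrangian f g K x y' + lagrangian f g K x' ((1 - s) • y + s • y')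
        - (1 - s) * lagrangian f g K x' y - μ / 2 * (s * (1 - s) * ‖x' - x‖ ^ 2) := by
  have hfc := hf.2 hx hx' (sub_nonneg.2 hs1) hs0 (by ring)
  have hgc := hg.2 hy hy' (sub_nonneg.2 hs1) hs0 (by ring)
  simp only [smul_eq_mul, norm_sub_rev x x'] at hfc hgc
  simp only [lagrangian, map_add, map_smul, inner_add_left, inner_add_right,
    real_inner_smul_left, real_inner_smul_right]
  nlinarith

variable [CompleteSpace E] [CompleteSpace F]

/-- Sum of the two prox inequalities of one iteration; the cross term `⟪K (x' - xh), yh - y'⟫`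
is absorbed by Young's inequality, which `L ≥ ‖K‖² / β` allows. -/
lemma lagrangian_step_le {μ β L : ℝ} (hf : StrongConvexOn Sf μ f) (hg : ConvexOn ℝ Sg g)
    (hβ : 0 < β) (hL : ‖K‖ ^ 2 / β ≤ L) {yd y' : F} {xh x' : E} (hy' : y' ∈ Sg)
    (hymax : IsMaxOn (fun z ↦ ⟪K xh, z⟫ - g z - β / 2 * ‖z - yd‖ ^ 2) Sg y') (hx' : x' ∈ Sf)
    (hxmin : IsMinOn (fun z ↦ f z + ⟪(ContinuousLinearMap.adjoint K) y', z⟫ +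
      L / 2 * ‖z - xh‖ ^ 2) Sf x')
    {z : E} (hz : z ∈ Sf) {yh : F} (hyh : yh ∈ Sg) :
    lagrangian f g K x' yh - β / 2 * ‖yh - yd‖ ^ 2 ≤
      lagrangian f g K z y' - β / 2 * ‖y' - yd‖ ^ 2 + L / 2 * ‖z - xh‖ ^ 2
        - (L + μ) / 2 * ‖z - x'‖ ^ 2 := by
  have hymin : IsMinOn (fun z ↦ g z + ⟪-K xh, z⟫ + β / 2 * ‖z - yd‖ ^ 2) Sg y' :=
    isMinOn_iff.2 fun z hz ↦ by
      have := isMaxOn_iff.1 hymax z hz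
      simp only [inner_neg_left]
      linarith
  have hyprox := (strongConvexOn_zero.2 hg).prox_add_sq_norm_sub_le hy' hymin hyh
  have hxprox := hf.prox_add_sq_norm_sub_le hx' hxmin hz
  have hyoung := real_inner_apply_le_young K hβ (x' - xh) (yh - y')
  have hL' : ‖K‖ ^ 2 / β / 2 * ‖x' - xh‖ ^ 2 ≤ L / 2 * ‖x' - xh‖ ^ 2 := by gcongr
  simp only [ContinuousLinearMap.adjoint_inner_left, inner_neg_left, map_sub, inner_sub_left,
    inner_sub_right, real_inner_comm (K _) y'] at hyprox hxprox hyoung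
  simp only [lagrangian]
  nlinarith

end Lagrangian

section Stepsizes

variable {τ β L : ℕ → ℝ}

lemma tau_succ_sq (hτ : ∀ k, τ (k + 1) = τ k / 2 * (√(τ k ^ 2 + 4) - τ k)) (k : ℕ) :
    τ (k + 1) ^ 2 = (1 - τ (k + 1)) * τ k ^ 2 := by
  rw [hτ k]
  linear_combination (τ k ^ 2 / 4) * Real.sq_sqrt (by positivity : (0 : ℝ) ≤ τ k ^ 2 + 4)

lemma tau_pos (hτ0 : τ 0 = 1) (hτ : ∀ k, τ (k + 1) = τ k / 2 * (√(τ k ^ 2 + 4) - τ k))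
    (k : ℕ) : 0 < τ k := by
  induction k with
  | zero => rw [hτ0]; exact one_pos
  | succ k ih =>
    have : τ k < √(τ k ^ 2 + 4) := Real.lt_sqrt_of_sq_lt (by linarith)
    rw [hτ k]
    exact mul_pos (by linarith) (by linarith)

lemma tau_succ_lt_one (hτ0 : τ 0 = 1) (hτ : ∀ k, τ (k + 1) = τ k / 2 * (√(τ k ^ 2 + 4) - τ k))
    (k : ℕ) : τ (k + 1) < 1 := by
  have h := tau_succ_sq hτ k
  have := pow_pos (tau_pos hτ0 hτ k) 2
  have := pow_pos (tau_pos hτ0 hτ (k + 1)) 2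
  nlinarith

lemma tau_le_one (hτ0 : τ 0 = 1) (hτ : ∀ k, τ (k + 1) = τ k / 2 * (√(τ k ^ 2 + 4) - τ k)) :
    ∀ k, τ k ≤ 1
  | 0 => hτ0.le
  | k + 1 => (tau_succ_lt_one hτ0 hτ k).le

lemma tau_one (hτ0 : τ 0 = 1) (hτ : ∀ k, τ (k + 1) = τ k / 2 * (√(τ k ^ 2 + 4) - τ k)) :
    τ 1 = (√5 - 1) / 2 := by
  rw [hτ 0, hτ0]
  norm_num
  ring

/-- `1 / τ` grows by at least `1 / 2` per step, starting from `1 / τ₁ = (1 + √5) / 2`. -/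
lemma tau_succ_mul_le (hτ0 : τ 0 = 1) (hτ : ∀ k, τ (k + 1) = τ k / 2 * (√(τ k ^ 2 + 4) - τ k))
    (k : ℕ) : τ (k + 1) * (k + 1 + √5) ≤ 2 := by
  have h5 : √5 ^ 2 = 5 := Real.sq_sqrt (by norm_num)
  induction k with
  | zero =>
    rw [tau_one hτ0 hτ]
    nlinarith
  | succ k ih =>
    have hsq := tau_succ_sq hτ (k + 1)
    have hs := tau_pos hτ0 hτ (k + 1 + 1)
    have hs1 := tau_succ_lt_one hτ0 hτ (k + 1)
    set A : ℝ := k + 1 + √5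
    have hA : 2 ≤ A := by nlinarith [Real.sqrt_nonneg 5, k.cast_nonneg (α := ℝ)]
    have htA : (τ (k + 1) * A) ^ 2 ≤ 4 := by
      nlinarith [mul_nonneg (tau_pos hτ0 hτ (k + 1)).le (by linarith : (0 : ℝ) ≤ A)]
    have hsA : τ (k + 1 + 1) ^ 2 * A ^ 2 + 4 * τ (k + 1 + 1) ≤ 4 := by
      have : τ (k + 1 + 1) ^ 2 * A ^ 2 = (1 - τ (k + 1 + 1)) * (τ (k + 1) * A) ^ 2 := by
        rw [hsq]; ring
      nlinarith [mul_le_mul_of_nonneg_left htA (sub_nonneg.2 hs1.le)]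
    push_cast
    by_contra! hlt
    have hu : 2 < τ (k + 1 + 1) * (A + 1) := by linarith
    nlinarith [mul_lt_mul_of_pos_left hu (by positivity : (0 : ℝ) < 4 * (A + 1)),
      mul_le_mul hu.le hu.le zero_le_two (by linarith), sq_nonneg A]

lemma beta_pos (hτ0 : τ 0 = 1) (hτ : ∀ k, τ (k + 1) = τ k / 2 * (√(τ k ^ 2 + 4) - τ k))
    (hβ0 : 0 < β 0) (hβ : ∀ k, β (k + 1) = β k / (1 + τ (k + 1))) (k : ℕ) : 0 < β k := by
  induction k with
  | zero => exact hβ0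
  | succ k ih => rw [hβ k]; exact div_pos ih (by linarith [tau_pos hτ0 hτ (k + 1)])

lemma L_succ {κ : ℝ} (hτ0 : τ 0 = 1) (hτ : ∀ k, τ (k + 1) = τ k / 2 * (√(τ k ^ 2 + 4) - τ k))
    (hβ0 : 0 < β 0) (hβ : ∀ k, β (k + 1) = β k / (1 + τ (k + 1)))
    (hL : ∀ k, L k = κ ^ 2 / β k) (k : ℕ) : L (k + 1) = L k * (1 + τ (k + 1)) := by
  have := beta_pos hτ0 hτ hβ0 hβ k
  have := tau_pos hτ0 hτ (k + 1)
  rw [hL, hL, hβ]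
  field_simp

/-- The base case is where `0.382 ≥ τ₁² = (3 - √5) / 2` enters; afterwards
`τ_{k+2}² L_{k+1} = (1 - τ_{k+2}) (1 + τ_{k+1}) τ_{k+1}² L_k` and the first factor is `≤ 1`. -/
lemma tau_succ_sq_mul_L_le {κ μ : ℝ} (hμ : 0 < μ) (hτ0 : τ 0 = 1)
    (hτ : ∀ k, τ (k + 1) = τ k / 2 * (√(τ k ^ 2 + 4) - τ k))
    (hβ0 : 0 < β 0) (hβ0' : β 0 ≥ 0.382 * κ ^ 2 / μ)
    (hβ : ∀ k, β (k + 1) = β k / (1 + τ (k + 1))) (hL : ∀ k, L k = κ ^ 2 / β k) (k : ℕ) :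
    τ (k + 1) ^ 2 * L k ≤ μ := by
  induction k with
  | zero =>
    have h5 : √5 ^ 2 = 5 := Real.sq_sqrt (by norm_num)
    have hτ1 : τ 1 ^ 2 ≤ 0.382 := by
      rw [tau_one hτ0 hτ]
      nlinarith [Real.sqrt_nonneg 5]
    rw [ge_iff_le, div_le_iff₀ hμ] at hβ0'
    rw [hL 0, mul_div_assoc', div_le_iff₀ hβ0]
    nlinarith [mul_le_mul_of_nonneg_right hτ1 (sq_nonneg κ)]
  | succ k ih =>
    have hsq := tau_succ_sq hτ (k + 1)
    have hs := tau_pos hτ0 hτ (k + 1 + 1)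
    have ht := tau_pos hτ0 hτ (k + 1)
    have hL0 : 0 ≤ L k := by rw [hL k]; exact div_nonneg (sq_nonneg κ) (beta_pos hτ0 hτ hβ0 hβ k).le
    set s := τ (k + 1 + 1)
    set t := τ (k + 1)
    have hshrink : (1 - s) * (1 + t) ≤ 1 := by
      nlinarith [mul_pos hs ht, sq_nonneg (s * (1 + t) - t), sq_nonneg (s * (1 + t) + t),
        mul_pos (mul_pos hs hs) ht]
    calc s ^ 2 * L (k + 1) = ((1 - s) * (1 + t)) * (t ^ 2 * L k) := by
          rw [L_succ hτ0 hτ hβ0 hβ hL k, hsq]; ring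
      _ ≤ 1 * (t ^ 2 * L k) := by gcongr
      _ ≤ μ := by rwa [one_mul]

lemma tau_mul_le (hτ0 : τ 0 = 1) (hτ : ∀ k, τ (k + 1) = τ k / 2 * (√(τ k ^ 2 + 4) - τ k)) :
    ∀ k : ℕ, τ k * (k + 2) ≤ 2
  | 0 => by rw [hτ0]; norm_num
  | k + 1 => by
    have := tau_succ_mul_le hτ0 hτ k
    have := tau_pos hτ0 hτ (k + 1)
    push_cast
    nlinarith [Real.sq_sqrt (show (0 : ℝ) ≤ 5 by norm_num), Real.sqrt_nonneg 5]

/-- `β_k = β₀ τ_k² / ∏_{i ≤ k} (1 - τ_i²)`, and `1 - τ_i² ≥ (i+√5-2)(i+√5+2)/(i+√5)²` by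
`tau_succ_mul_le`; the product of these lower bounds telescopes. -/
lemma beta_mul_le (hτ0 : τ 0 = 1) (hτ : ∀ k, τ (k + 1) = τ k / 2 * (√(τ k ^ 2 + 4) - τ k))
    (hβ0 : 0 < β 0) (hβ : ∀ k, β (k + 1) = β k / (1 + τ (k + 1))) (k : ℕ) :
    β k * ((√5 - 1) * √5 * (k + √5 + 1) * (k + √5 + 2)) ≤
      β 0 * τ k ^ 2 * ((√5 + 1) * (√5 + 2) * (k + √5 - 1) * (k + √5)) := by
  have h5 : √5 ^ 2 = 5 := Real.sq_sqrt (by norm_num)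
  have ha : 2 ≤ √5 := by nlinarith [Real.sqrt_nonneg 5]
  induction k with
  | zero => rw [hτ0]; push_cast; exact le_of_eq (by ring)
  | succ n ih =>
    set a := √5
    set u := τ (n + 1)
    set d : ℝ := n + a + 1
    have hu := tau_pos hτ0 hτ (n + 1)
    have hu1 := tau_succ_lt_one hτ0 hτ n
    have hd : 2 ≤ d := by have := n.cast_nonneg (α := ℝ); linarith
    have hβu : β (n + 1) * (1 + u) = β n := by
      rw [hβ n]; exact div_mul_cancel₀ _ (by linarith : (0 : ℝ) < 1 + u).ne'
    have hud : (u * d) ^ 2 ≤ 4 := by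
      have : u * d ≤ 2 := by simpa only [d, add_right_comm] using tau_succ_mul_le hτ0 hτ n
      nlinarith [mul_pos hu (by linarith : (0 : ℝ) < d)]
    have hτn : τ n ^ 2 * ((d - 2) * (d + 2)) ≤ u ^ 2 * (1 + u) * d ^ 2 := by
      refine le_of_mul_le_mul_left ?_ (sub_pos.2 hu1)
      calc (1 - u) * (τ n ^ 2 * ((d - 2) * (d + 2))) = u ^ 2 * (d ^ 2 - 4) := by
            rw [tau_succ_sq hτ n]; ring
        _ ≤ u ^ 2 * ((1 - u ^ 2) * d ^ 2) := by nlinarith [sq_nonneg u]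
        _ = (1 - u) * (u ^ 2 * (1 + u) * d ^ 2) := by ring
    refine le_of_mul_le_mul_right ?_ (by positivity : 0 < (1 + u) * d)
    push_cast
    calc β (n + 1) * ((a - 1) * a * (n + 1 + a + 1) * (n + 1 + a + 2)) * ((1 + u) * d)
        = β n * ((a - 1) * a * (n + a + 1) * (n + a + 2)) * (d + 2) := by
          rw [← hβu]; ring
      _ ≤ β 0 * τ n ^ 2 * ((a + 1) * (a + 2) * (n + a - 1) * (n + a)) * (d + 2) := by
          gcongr
      _ = β 0 * ((a + 1) * (a + 2) * (d - 1)) * (τ n ^ 2 * ((d - 2) * (d + 2))) := by ring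
      _ ≤ β 0 * ((a + 1) * (a + 2) * (d - 1)) * (u ^ 2 * (1 + u) * d ^ 2) := by
          have : 0 ≤ d - 1 := by linarith
          gcongr
      _ = β 0 * u ^ 2 * ((a + 1) * (a + 2) * (n + 1 + a - 1) * (n + 1 + a)) * ((1 + u) * d) := by
          ring

lemma poly_sqrt_five_le {r : ℝ} (hr : 0 ≤ r) :
    4 * (√5 + 1) * (√5 + 2) * (r + √5 - 1) * (r + 4) ^ 2 ≤
      20 * (√5 - 1) * √5 * (r + √5) * (r + √5 + 1) * (r + √5 + 2) := by
  have h5 : √5 ^ 2 = 5 := Real.sq_sqrt (by norm_num)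
  have hlb : 2.236 ≤ √5 := by nlinarith [Real.sqrt_nonneg 5]
  have hub : √5 ≤ 2.25 := by nlinarith [Real.sqrt_nonneg 5]
  have key : 20 * (√5 - 1) * √5 * (r + √5) * (r + √5 + 1) * (r + √5 + 2)
      - 4 * (√5 + 1) * (√5 + 2) * (r + √5 - 1) * (r + 4) ^ 2
      = (72 - 32 * √5) * r ^ 3 + 128 * (√5 - 2) * r ^ 2 + (396 - 60 * √5) * r
        + (288 + 144 * √5) := by
    linear_combination (16 * r ^ 3 + 56 * √5 * r ^ 2 - 40 * r ^ 2 + 60 * √5 ^ 2 * r + 28 * √5 * r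
      + 92 * r + 20 * √5 ^ 3 + 40 * √5 ^ 2 + 16 * √5 + 32) * h5
  nlinarith [mul_nonneg (mul_nonneg (by linarith : (0 : ℝ) ≤ 72 - 32 * √5) hr) (mul_nonneg hr hr),
    mul_nonneg (mul_nonneg (by linarith : (0 : ℝ) ≤ 128 * (√5 - 2)) hr) hr,
    mul_nonneg (by linarith : (0 : ℝ) ≤ 396 - 60 * √5) hr]

lemma beta_mul_sq_le (hτ0 : τ 0 = 1) (hτ : ∀ k, τ (k + 1) = τ k / 2 * (√(τ k ^ 2 + 4) - τ k))
    (hβ0 : 0 < β 0) (hβ : ∀ k, β (k + 1) = β k / (1 + τ (k + 1))) :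
    ∀ k : ℕ, β k * (k + 4) ^ 2 ≤ 20 * β 0
  | 0 => by norm_num; linarith
  | k + 1 => by
    have h5 : √5 ^ 2 = 5 := Real.sq_sqrt (by norm_num)
    have ha : 2 ≤ √5 := by nlinarith [Real.sqrt_nonneg 5]
    set r : ℝ := ((k + 1 : ℕ) : ℝ)
    have hr : 0 ≤ r := Nat.cast_nonneg _
    have hτr : (τ (k + 1) * (r + √5)) ^ 2 ≤ 4 := by
      have h := tau_succ_mul_le hτ0 hτ k
      have hpos := tau_pos hτ0 hτ (k + 1)
      have : τ (k + 1) * (r + √5) ≤ 2 := by simpa [r] using h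
      nlinarith [mul_nonneg hpos.le (by positivity : (0 : ℝ) ≤ r + √5)]
    have hP : 0 < (√5 - 1) * √5 * (r + √5) * (r + √5 + 1) * (r + √5 + 2) := by
      have : 0 < √5 - 1 := by linarith
      positivity
    have hc : 0 ≤ β 0 * ((√5 + 1) * (√5 + 2) * (r + √5 - 1) * (r + 4) ^ 2) := by
      have : 0 ≤ r + √5 - 1 := by linarith
      positivity
    refine le_of_mul_le_mul_right ?_ hP
    calc β (k + 1) * (r + 4) ^ 2 * ((√5 - 1) * √5 * (r + √5) * (r + √5 + 1) * (r + √5 + 2))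
        = β (k + 1) * ((√5 - 1) * √5 * (r + √5 + 1) * (r + √5 + 2)) * ((r + 4) ^ 2 * (r + √5)) := by
          ring
      _ ≤ β 0 * τ (k + 1) ^ 2 * ((√5 + 1) * (√5 + 2) * (r + √5 - 1) * (r + √5))
            * ((r + 4) ^ 2 * (r + √5)) :=
          mul_le_mul_of_nonneg_right (beta_mul_le hτ0 hτ hβ0 hβ (k + 1)) (by positivity)
      _ = β 0 * ((√5 + 1) * (√5 + 2) * (r + √5 - 1) * (r + 4) ^ 2) * (τ (k + 1) * (r + √5)) ^ 2 := by
          ring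
      _ ≤ β 0 * ((√5 + 1) * (√5 + 2) * (r + √5 - 1) * (r + 4) ^ 2) * 4 := by gcongr
      _ ≤ 20 * β 0 * ((√5 - 1) * √5 * (r + √5) * (r + √5 + 1) * (r + √5 + 2)) := by
          nlinarith [poly_sqrt_five_le hr]

end Stepsizes

section Momentum

/-- `θ` splits the momentum step `u - (η/s) d` into a convex combination of `u` and
`u - ((1-t)/t) d`; it is chosen so that `η / s = (1 - θ) (1 - t) / t`. -/
lemma exists_momentum_weight {P μ s t : ℝ} (hP : 0 ≤ P) (hμ : 0 < μ) (hs : 0 < s)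
    (ht : 0 < t) (hst : s ^ 2 = (1 - s) * t ^ 2) (hkey : P * s ^ 2 ≤ μ) :
    ∃ θ : ℝ, 0 ≤ θ ∧ θ ≤ 1 ∧
      (1 - t) * t / (t ^ 2 + ((P * (1 + s) + μ) / (P + μ)) * s) / s = (1 - θ) * ((1 - t) / t) ∧
      P * (1 + s) * s ^ 2 * θ ≤ μ * s * (1 - s) ∧
      P * (1 + s) * s ^ 2 * (1 - θ) ≤ (1 - s) * (P + μ) * t ^ 2 := by
  have hPμ : 0 < P + μ := by linarith
  set N := t ^ 2 * (P + μ) + s * (P * (1 + s) + μ) with hN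
  have hNpos : 0 < N := by positivity
  have hsN : s * N = t ^ 2 * (P + μ) + P * s ^ 3 := by
    rw [hN]; linear_combination (P + μ) * hst
  have hθc : 1 - P * s ^ 2 / N = t ^ 2 * (P + μ) / (s * N) := by
    field_simp
    linear_combination hsN
  have hgap : 0 ≤ μ - P * s ^ 2 := by linarith
  refine ⟨P * s ^ 2 / N, by positivity, ?_, ?_, ?_, ?_⟩
  · have : 0 ≤ t ^ 2 * (P + μ) / (s * N) := by positivity
    linarith
  · rw [hθc]
    have : t ^ 2 + (P * (1 + s) + μ) / (P + μ) * s = N / (P + μ) := by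
      rw [hN]; field_simp
    rw [this]
    field_simp
  · rw [← mul_div_assoc, div_le_iff₀ hNpos]
    have e : μ * s * (1 - s) * N - P * (1 + s) * s ^ 2 * (P * s ^ 2) =
        s ^ 2 * (P * (1 + s) + μ) * (μ - P * s ^ 2) := by
      rw [hN]; linear_combination (-μ * s * (P + μ)) * hst
    nlinarith [mul_nonneg (by positivity : 0 ≤ s ^ 2 * (P * (1 + s) + μ)) hgap]
  · rw [hθc, ← mul_div_assoc, div_le_iff₀ (by positivity)]
    have e : (1 - s) * (P + μ) * t ^ 2 * (s * N) - P * (1 + s) * s ^ 2 * (t ^ 2 * (P + μ)) =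
        (P + μ) * t ^ 2 * s ^ 2 * (μ - P * s ^ 2) := by
      rw [hsN]; linear_combination (-(P + μ) ^ 2 * t ^ 2) * hst
    nlinarith [mul_nonneg (by positivity : 0 ≤ (P + μ) * t ^ 2 * s ^ 2) hgap]

variable {E : Type*} [NormedAddCommGroup E] [InnerProductSpace ℝ E]

lemma sq_norm_momentum_le {P μ s t η : ℝ} (hP : 0 ≤ P) (hμ : 0 < μ) (hs : 0 < s)
    (ht : 0 < t) (hst : s ^ 2 = (1 - s) * t ^ 2) (hkey : P * s ^ 2 ≤ μ)
    (hη : η = (1 - t) * t / (t ^ 2 + ((P * (1 + s) + μ) / (P + μ)) * s)) (u d : E) :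
    P * (1 + s) * s ^ 2 * ‖u - (η / s) • d‖ ^ 2 ≤
      μ * s * (1 - s) * ‖u‖ ^ 2 + (1 - s) * (P + μ) * t ^ 2 * ‖u - ((1 - t) / t) • d‖ ^ 2 := by
  obtain ⟨θ, hθ0, hθ1, hηθ, hu, hv⟩ := exists_momentum_weight hP hμ hs ht hst hkey
  have hsplit : u - (η / s) • d = (1 - (1 - θ)) • u + (1 - θ) • (u - ((1 - t) / t) • d) := by
    rw [hη, hηθ]; module
  have hconv := sq_norm_convexComb_le (sub_nonneg.2 hθ1) (by linarith) u (u - ((1 - t) / t) • d)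
  rw [← hsplit, sub_sub_cancel] at hconv
  calc P * (1 + s) * s ^ 2 * ‖u - (η / s) • d‖ ^ 2
      ≤ P * (1 + s) * s ^ 2 * (θ * ‖u‖ ^ 2 + (1 - θ) * ‖u - ((1 - t) / t) • d‖ ^ 2) := by
        gcongr
    _ = (P * (1 + s) * s ^ 2 * θ) * ‖u‖ ^ 2
        + (P * (1 + s) * s ^ 2 * (1 - θ)) * ‖u - ((1 - t) / t) • d‖ ^ 2 := by ring
    _ ≤ _ := by gcongr

end Momentum

section Asgard

variable {E F : Type*} [NormedAddCommGroup E] [InnerProductSpace ℝ E] [CompleteSpace E]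
  [NormedAddCommGroup F] [InnerProductSpace ℝ F] [CompleteSpace F]

/-- ASGARD+ with the parameter rules of the case `μ_f > 0`, `μ_{g*} = 0`; `y 0` plays no role. -/
structure IsAsgardRun (f : E → ℝ) (Sf : Set E) (g : F → ℝ) (Sg : Set F) (K : E →L[ℝ] F)
    (μ : ℝ) (τ β L η : ℕ → ℝ) (yd : F) (x xh : ℕ → E) (y yt : ℕ → F) : Prop where
  tau_zero : τ 0 = 1
  tau_succ : ∀ k, τ (k + 1) = τ k / 2 * (√(τ k ^ 2 + 4) - τ k)
  beta_zero_pos : 0 < β 0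
  beta_zero_ge : β 0 ≥ 0.382 * ‖K‖ ^ 2 / μ
  beta_succ : ∀ k, β (k + 1) = β k / (1 + τ (k + 1))
  L_eq : ∀ k, L k = ‖K‖ ^ 2 / β k
  eta_succ : ∀ k, η (k + 1) =
    (1 - τ k) * τ k / (τ k ^ 2 + ((L (k + 1) + μ) / (L k + μ)) * τ (k + 1))
  x_zero_mem : x 0 ∈ Sf
  xh_zero : xh 0 = x 0
  yt_zero_mem : yt 0 ∈ Sg
  y_succ : ∀ k, y (k + 1) ∈ Sg ∧
    IsMaxOn (fun z ↦ ⟪K (xh k), z⟫ - g z - β k / 2 * ‖z - yd‖ ^ 2) Sg (y (k + 1))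
  x_succ : ∀ k, x (k + 1) ∈ Sf ∧
    IsMinOn (fun z ↦ f z + ⟪(ContinuousLinearMap.adjoint K) (y (k + 1)), z⟫ +
      L k / 2 * ‖z - xh k‖ ^ 2) Sf (x (k + 1))
  xh_succ : ∀ k, xh (k + 1) = x (k + 1) + η (k + 1) • (x (k + 1) - x k)
  yt_succ : ∀ k, yt (k + 1) = (1 - τ k) • yt k + τ k • y (k + 1)

/-- The point `w` with `x (m + 1) = (1 - τ m) • x m + τ m • w`. -/
noncomputable def auxIterate (τ : ℕ → ℝ) (x : ℕ → E) (m : ℕ) : E :=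
  (τ m)⁻¹ • (x (m + 1) - (1 - τ m) • x m)

namespace IsAsgardRun

variable {f : E → ℝ} {Sf : Set E} {g : F → ℝ} {Sg : Set F} {K : E →L[ℝ] F} {μ : ℝ}
  {τ β L η : ℕ → ℝ} {yd : F} {x xh : ℕ → E} {y yt : ℕ → F}

lemma x_mem (run : IsAsgardRun f Sf g Sg K μ τ β L η yd x xh y yt) : ∀ m, x m ∈ Sf
  | 0 => run.x_zero_mem
  | m + 1 => (run.x_succ m).1

lemma yt_mem (run : IsAsgardRun f Sf g Sg K μ τ β L η yd x xh y yt) (hSg : Convex ℝ Sg) :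
    ∀ m, yt m ∈ Sg
  | 0 => run.yt_zero_mem
  | m + 1 => by
    rw [run.yt_succ m]
    exact hSg (run.yt_mem hSg m) (run.y_succ m).1
      (sub_nonneg.2 (tau_le_one run.tau_zero run.tau_succ m))
      (tau_pos run.tau_zero run.tau_succ m).le (by ring)

lemma L_nonneg (run : IsAsgardRun f Sf g Sg K μ τ β L η yd x xh y yt) (m : ℕ) : 0 ≤ L m := by
  rw [run.L_eq m]
  exact div_nonneg (sq_nonneg _) (beta_pos run.tau_zero run.tau_succ run.beta_zero_pos
    run.beta_succ m).le

lemma L_succ_mul_sq_norm_sub_xh_le (run : IsAsgardRun f Sf g Sg K μ τ β L η yd x xh y yt)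
    (hμ : 0 < μ) (m : ℕ) (xt : E) :
    L (m + 1) / 2 * ‖((1 - τ (m + 1)) • x (m + 1) + τ (m + 1) • xt) - xh (m + 1)‖ ^ 2 ≤
      μ / 2 * (τ (m + 1) * (1 - τ (m + 1)) * ‖xt - x (m + 1)‖ ^ 2) +
        (1 - τ (m + 1)) * ((L m + μ) * τ m ^ 2 / 2 * ‖xt - auxIterate τ x m‖ ^ 2) := by
  set s := τ (m + 1)
  set t := τ m
  have hs : 0 < s := tau_pos run.tau_zero run.tau_succ (m + 1)
  have ht : 0 < t := tau_pos run.tau_zero run.tau_succ m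
  have hsq : s ^ 2 = (1 - s) * t ^ 2 := tau_succ_sq run.tau_succ m
  have hLs : L (m + 1) = L m * (1 + s) :=
    L_succ run.tau_zero run.tau_succ run.beta_zero_pos run.beta_succ run.L_eq m
  have hkey : L m * s ^ 2 ≤ μ := by
    rw [mul_comm]
    exact tau_succ_sq_mul_L_le hμ run.tau_zero run.tau_succ run.beta_zero_pos run.beta_zero_ge
      run.beta_succ run.L_eq m
  have hη : η (m + 1) = (1 - t) * t / (t ^ 2 + ((L m * (1 + s) + μ) / (L m + μ)) * s) := by
    rw [run.eta_succ m, hLs]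
  have hmom := sq_norm_momentum_le (run.L_nonneg m) hμ hs ht hsq hkey hη
    (xt - x (m + 1)) (x (m + 1) - x m)
  have hv : ((1 - s) • x (m + 1) + s • xt) - xh (m + 1) =
      s • ((xt - x (m + 1)) - (η (m + 1) / s) • (x (m + 1) - x m)) := by
    rw [run.xh_succ m]
    match_scalars <;> field_simp
    ring
  have hw : xt - auxIterate τ x m = (xt - x (m + 1)) - ((1 - t) / t) • (x (m + 1) - x m) := by
    change xt - t⁻¹ • (x (m + 1) - (1 - t) • x m) = _
    match_scalars <;> field_simp
    ring
  rw [hv, hw, norm_smul, mul_pow, Real.norm_of_nonneg hs.le, hLs]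
  linarith

lemma invariant_zero (run : IsAsgardRun f Sf g Sg K μ τ β L η yd x xh y yt)
    (hf : StrongConvexOn Sf μ f) (hg : ConvexOn ℝ Sg g) {xt : E} (hxt : xt ∈ Sf) {yh : F}
    (hyh : yh ∈ Sg) :
    lagrangian f g K (x 1) yh - β 0 / 2 * ‖yh - yd‖ ^ 2
        + (L 0 + μ) * τ 0 ^ 2 / 2 * ‖xt - auxIterate τ x 0‖ ^ 2
      ≤ lagrangian f g K xt (yt 1) + τ 0 ^ 2 * (L 0 / 2) * ‖xt - x 0‖ ^ 2 := by
  have hstep := lagrangian_step_le hf hg run.beta_zero_pos (run.L_eq 0).ge (run.y_succ 0).1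
    (run.y_succ 0).2 (run.x_succ 0).1 (run.x_succ 0).2 hxt hyh
  have hw : auxIterate τ x 0 = x 1 := by simp [auxIterate, run.tau_zero]
  have hyt : yt 1 = y 1 := by simp [run.yt_succ 0, run.tau_zero]
  rw [run.xh_zero] at hstep
  rw [hw, hyt, run.tau_zero]
  nlinarith [run.beta_zero_pos, sq_nonneg ‖y 1 - yd‖]

lemma invariant_succ (run : IsAsgardRun f Sf g Sg K μ τ β L η yd x xh y yt) (hμ : 0 < μ)
    (hf : StrongConvexOn Sf μ f) (hg : ConvexOn ℝ Sg g) {xt : E} (hxt : xt ∈ Sf) (m : ℕ)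
    (ih : ∀ yh ∈ Sg, lagrangian f g K (x (m + 1)) yh - β m / 2 * ‖yh - yd‖ ^ 2
        + (L m + μ) * τ m ^ 2 / 2 * ‖xt - auxIterate τ x m‖ ^ 2
      ≤ lagrangian f g K xt (yt (m + 1)) + τ m ^ 2 * (L 0 / 2) * ‖xt - x 0‖ ^ 2)
    {yh : F} (hyh : yh ∈ Sg) :
    lagrangian f g K (x (m + 2)) yh - β (m + 1) / 2 * ‖yh - yd‖ ^ 2
        + (L (m + 1) + μ) * τ (m + 1) ^ 2 / 2 * ‖xt - auxIterate τ x (m + 1)‖ ^ 2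
      ≤ lagrangian f g K xt (yt (m + 2)) + τ (m + 1) ^ 2 * (L 0 / 2) * ‖xt - x 0‖ ^ 2 := by
  have hs := tau_pos run.tau_zero run.tau_succ (m + 1)
  have hs1 := tau_succ_lt_one run.tau_zero run.tau_succ m
  have hsq := tau_succ_sq run.tau_succ m
  have hβ := beta_pos run.tau_zero run.tau_succ run.beta_zero_pos run.beta_succ
  have hz : (1 - τ (m + 1)) • x (m + 1) + τ (m + 1) • xt ∈ Sf :=
    hf.1 (run.x_mem _) hxt (by linarith) hs.le (by ring)
  have hstep := lagrangian_step_le hf hg (hβ (m + 1)) (run.L_eq (m + 1)).ge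
    (run.y_succ (m + 1)).1 (run.y_succ (m + 1)).2 (run.x_succ (m + 1)).1 (run.x_succ (m + 1)).2
    hz hyh
  have hcomb := lagrangian_convexComb_le (K := K) hf hg hs.le hs1.le (run.x_mem (m + 1)) hxt
    (run.yt_mem hg.1 (m + 1)) (run.y_succ (m + 1)).1
  rw [← run.yt_succ] at hcomb
  have hih := mul_le_mul_of_nonneg_left (ih _ (run.y_succ (m + 1)).1) (sub_nonneg.2 hs1.le)
  have hβs : (1 - τ (m + 1)) * β m ≤ β (m + 1) := by
    rw [run.beta_succ m, le_div_iff₀ (by linarith)]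
    nlinarith [hβ m]
  have hβy := mul_le_mul_of_nonneg_right hβs (sq_nonneg ‖y (m + 1 + 1) - yd‖)
  have hmom := run.L_succ_mul_sq_norm_sub_xh_le hμ m xt
  have hnext : ((1 - τ (m + 1)) • x (m + 1) + τ (m + 1) • xt) - x (m + 2) =
      τ (m + 1) • (xt - auxIterate τ x (m + 1)) := by
    simp only [auxIterate]
    match_scalars <;> field_simp
  rw [hnext, norm_smul, mul_pow, Real.norm_of_nonneg hs.le] at hstep
  have hτ2 : (1 - τ (m + 1)) * (τ m ^ 2 * (L 0 / 2) * ‖xt - x 0‖ ^ 2) =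
      τ (m + 1) ^ 2 * (L 0 / 2) * ‖xt - x 0‖ ^ 2 := by
    rw [hsq]; ring
  linarith

lemma invariant (run : IsAsgardRun f Sf g Sg K μ τ β L η yd x xh y yt) (hμ : 0 < μ)
    (hf : StrongConvexOn Sf μ f) (hg : ConvexOn ℝ Sg g) {xt : E} (hxt : xt ∈ Sf) (m : ℕ) :
    ∀ yh ∈ Sg, lagrangian f g K (x (m + 1)) yh - β m / 2 * ‖yh - yd‖ ^ 2
        + (L m + μ) * τ m ^ 2 / 2 * ‖xt - auxIterate τ x m‖ ^ 2
      ≤ lagrangian f g K xt (yt (m + 1)) + τ m ^ 2 * (L 0 / 2) * ‖xt - x 0‖ ^ 2 := by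
  induction m with
  | zero => exact fun yh hyh ↦ run.invariant_zero hf hg hxt hyh
  | succ m ih => exact fun yh hyh ↦ run.invariant_succ hμ hf hg hxt m ih hyh

lemma lagrangian_sub_le (run : IsAsgardRun f Sf g Sg K μ τ β L η yd x xh y yt) (hμ : 0 < μ)
    (hf : StrongConvexOn Sf μ f) (hg : ConvexOn ℝ Sg g) (j : ℕ) {xt : E} (hxt : xt ∈ Sf)
    {yh : F} (hyh : yh ∈ Sg) :
    lagrangian f g K (x (j + 1)) yh - lagrangian f g K xt (yt (j + 1)) ≤
      2 * ‖K‖ ^ 2 / (β 0 * ((j : ℝ) + 2) ^ 2) * ‖x 0 - xt‖ ^ 2 +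
        10 * β 0 / ((j : ℝ) + 4) ^ 2 * ‖yd - yh‖ ^ 2 := by
  have hinv := run.invariant hμ hf hg hxt j yh hyh
  have hdrop : 0 ≤ (L j + μ) * τ j ^ 2 / 2 * ‖xt - auxIterate τ x j‖ ^ 2 := by
    have := run.L_nonneg j
    have : 0 ≤ L j + μ := by linarith
    positivity
  have hβ0 := run.beta_zero_pos
  have hxcoef : τ j ^ 2 * (L 0 / 2) ≤ 2 * ‖K‖ ^ 2 / (β 0 * ((j : ℝ) + 2) ^ 2) := by
    have hτj := tau_mul_le run.tau_zero run.tau_succ j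
    have : 0 ≤ τ j * (j + 2) := mul_nonneg (tau_pos run.tau_zero run.tau_succ j).le (by positivity)
    rw [run.L_eq 0, le_div_iff₀ (by positivity)]
    calc τ j ^ 2 * (‖K‖ ^ 2 / β 0 / 2) * (β 0 * ((j : ℝ) + 2) ^ 2)
        = (τ j * (j + 2)) ^ 2 * (‖K‖ ^ 2 / 2) := by field_simp
      _ ≤ 2 ^ 2 * (‖K‖ ^ 2 / 2) := by gcongr
      _ = 2 * ‖K‖ ^ 2 := by ring
  have hycoef : β j / 2 ≤ 10 * β 0 / ((j : ℝ) + 4) ^ 2 := by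
    rw [le_div_iff₀ (by positivity)]
    linarith [beta_mul_sq_le run.tau_zero run.tau_succ hβ0 run.beta_succ j]
  rw [norm_sub_rev (x 0), norm_sub_rev yd]
  nlinarith [mul_le_mul_of_nonneg_right hxcoef (sq_nonneg ‖xt - x 0‖),
    mul_le_mul_of_nonneg_right hycoef (sq_nonneg ‖yh - yd‖)]

end IsAsgardRun

end Asgard

theorem stmt7_general {p n : ℕ}
    (f : EuclideanSpace ℝ (Fin p) → ℝ) (Sf : Set (EuclideanSpace ℝ (Fin p)))
    (gstar : EuclideanSpace ℝ (Fin n) → ℝ) (Sg : Set (EuclideanSpace ℝ (Fin n)))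
    (K : EuclideanSpace ℝ (Fin p) →L[ℝ] EuclideanSpace ℝ (Fin n))
    (μf : ℝ) (hμf : 0 < μf)
    -- `f` is `μ_f`-strongly convex, `g*` is merely convex
    (hf : ConvexOn ℝ Sf (fun x => f x - μf / 2 * ‖x‖ ^ 2))
    (hgstar : ConvexOn ℝ Sg gstar)
    -- the sets defining the gap function, containing the saddle point
    (X : Set (EuclideanSpace ℝ (Fin p))) (Y : Set (EuclideanSpace ℝ (Fin n)))
    (hXSf : X ⊆ Sf) (hYSg : Y ⊆ Sg)
    -- parameters of ASGARD+
    (τ β L η : ℕ → ℝ)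
    (hτ0 : τ 0 = 1)
    (hτ : ∀ k, τ (k + 1) = τ k / 2 * (Real.sqrt ((τ k) ^ 2 + 4) - τ k))
    (hβ0 : 0 < β 0) (hβ0' : β 0 ≥ 0.382 * ‖K‖ ^ 2 / μf)
    (hβ : ∀ k, β (k + 1) = β k / (1 + τ (k + 1)))
    (hL : ∀ k, L k = ‖K‖ ^ 2 / β k)
    (hη : ∀ k, η (k + 1) =
      (1 - τ k) * τ k / ((τ k) ^ 2 + ((L (k + 1) + μf) / (L k + μf)) * τ (k + 1)))
    -- the iterates of ASGARD+
    (ydot : EuclideanSpace ℝ (Fin n))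
    (x xhat : ℕ → EuclideanSpace ℝ (Fin p)) (yseq ytil : ℕ → EuclideanSpace ℝ (Fin n))
    (hx0 : x 0 ∈ Sf) (hxhat0 : xhat 0 = x 0) (hytil0 : ytil 0 ∈ Sg)
    (hyup : ∀ k, yseq (k + 1) ∈ Sg ∧
      IsMaxOn (fun z => ⟪K (xhat k), z⟫ - gstar z - β k / 2 * ‖z - ydot‖ ^ 2) Sg
        (yseq (k + 1)))
    (hxup : ∀ k, x (k + 1) ∈ Sf ∧
      IsMinOn (fun z => f z + ⟪(ContinuousLinearMap.adjoint K) (yseq (k + 1)), z⟫ +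
        L k / 2 * ‖z - xhat k‖ ^ 2) Sf (x (k + 1)))
    (hxhat : ∀ k, xhat (k + 1) = x (k + 1) + η (k + 1) • (x (k + 1) - x k))
    (hytil : ∀ k, ytil (k + 1) = (1 - τ k) • ytil k + τ k • yseq (k + 1))
    -- the suprema appearing in the bound are finite
    (hXb : BddAbove ((fun x' => ‖x 0 - x'‖ ^ 2) '' X))
    (hYb : BddAbove ((fun y' => ‖ydot - y'‖ ^ 2) '' Y)) :
    ∀ k : ℕ, 1 ≤ k → ∀ xt ∈ X, ∀ yt ∈ Y,
      (f (x k) + ⟪K (x k), yt⟫ - gstar yt) - (f xt + ⟪K xt, ytil k⟫ - gstar (ytil k)) ≤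
        2 * ‖K‖ ^ 2 / (β 0 * ((k : ℝ) + 1) ^ 2) * sSup ((fun x' => ‖x 0 - x'‖ ^ 2) '' X) +
        10 * β 0 / (((k : ℝ) + 3) ^ 2) * sSup ((fun y' => ‖ydot - y'‖ ^ 2) '' Y) := by
  intro k hk xt hxt yt hyt
  obtain ⟨j, rfl⟩ : ∃ j, k = j + 1 := ⟨k - 1, by omega⟩
  have run : IsAsgardRun f Sf gstar Sg K μf τ β L η ydot x xhat yseq ytil :=
    ⟨hτ0, hτ, hβ0, hβ0', hβ, hL, hη, hx0, hxhat0, hytil0, hyup, hxup, hxhat, hytil⟩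
  have hbound := run.lagrangian_sub_le hμf (strongConvexOn_iff_convex.2 hf) hgstar j
    (hXSf hxt) (hYSg hyt)
  have hxS : ‖x 0 - xt‖ ^ 2 ≤ sSup ((fun x' => ‖x 0 - x'‖ ^ 2) '' X) :=
    le_csSup hXb ⟨xt, hxt, rfl⟩
  have hyS : ‖ydot - yt‖ ^ 2 ≤ sSup ((fun y' => ‖ydot - y'‖ ^ 2) '' Y) :=
    le_csSup hYb ⟨yt, hyt, rfl⟩
  have hj2 : ((j + 1 : ℕ) : ℝ) + 1 = j + 2 := by push_cast; ring
  have hj4 : ((j + 1 : ℕ) : ℝ) + 3 = j + 4 := by push_cast; ring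
  rw [hj2, hj4]
  exact hbound.trans (by gcongr)

/-- Theorem 2(a): gap-function bound of ASGARD+ when `f` is
`μ_f`-strongly convex with `μ_f > 0` and `g*` is merely convex, `μ_{g*} = 0`.
For all `k ≥ 1`,
`G_{X×Y}(x^k, ỹ^k) ≤ (2‖K‖²/(β₀(k+1)²)) sup_{x∈X}‖x⁰-x‖² + (10β₀/(k+3)²) sup_{y∈Y}‖ẏ-y‖²`,
stated equivalently as the bound on `L(x^k, ỹ) - L(x̃, ỹ^k)` for all `x̃ ∈ X, ỹ ∈ Y`. -/
theorem stmt7 {p n : ℕ}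
    (f : EuclideanSpace ℝ (Fin p) → ℝ) (Sf : Set (EuclideanSpace ℝ (Fin p)))
    (gstar : EuclideanSpace ℝ (Fin n) → ℝ) (Sg : Set (EuclideanSpace ℝ (Fin n)))
    (K : EuclideanSpace ℝ (Fin p) →L[ℝ] EuclideanSpace ℝ (Fin n))
    (hSf : Convex ℝ Sf) (hSg : Convex ℝ Sg)
    (hSfc : IsClosed Sf) (hSgc : IsClosed Sg)
    (μf : ℝ) (hμf : 0 < μf)
    -- `f` is `μ_f`-strongly convex, `g*` is merely convex
    (hf : ConvexOn ℝ Sf (fun x => f x - μf / 2 * ‖x‖ ^ 2))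
    (hgstar : ConvexOn ℝ Sg gstar)
    -- a saddle point of the Lagrangian exists
    (xs : EuclideanSpace ℝ (Fin p)) (ys : EuclideanSpace ℝ (Fin n))
    (hxs : xs ∈ Sf) (hys : ys ∈ Sg)
    (hsaddle : ∀ x ∈ Sf, ∀ y ∈ Sg,
      f xs + ⟪K xs, y⟫ - gstar y ≤ f xs + ⟪K xs, ys⟫ - gstar ys ∧
      f xs + ⟪K xs, ys⟫ - gstar ys ≤ f x + ⟪K x, ys⟫ - gstar ys)
    -- the sets defining the gap function, containing the saddle point
    (X : Set (EuclideanSpace ℝ (Fin p))) (Y : Set (EuclideanSpace ℝ (Fin n)))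
    (hXSf : X ⊆ Sf) (hYSg : Y ⊆ Sg)
    (hXc : Convex ℝ X) (hYc : Convex ℝ Y) (hXcl : IsClosed X) (hYcl : IsClosed Y)
    (hxsX : xs ∈ X) (hysY : ys ∈ Y)
    -- parameters of ASGARD+
    (τ β L η : ℕ → ℝ)
    (hτ0 : τ 0 = 1)
    (hτ : ∀ k, τ (k + 1) = τ k / 2 * (Real.sqrt ((τ k) ^ 2 + 4) - τ k))
    (hβ0 : 0 < β 0) (hβ0' : β 0 ≥ 0.382 * ‖K‖ ^ 2 / μf)
    (hβ : ∀ k, β (k + 1) = β k / (1 + τ (k + 1)))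
    (hL : ∀ k, L k = ‖K‖ ^ 2 / β k)
    (hη : ∀ k, η (k + 1) =
      (1 - τ k) * τ k / ((τ k) ^ 2 + ((L (k + 1) + μf) / (L k + μf)) * τ (k + 1)))
    -- the iterates of ASGARD+
    (ydot : EuclideanSpace ℝ (Fin n))
    (x xhat : ℕ → EuclideanSpace ℝ (Fin p)) (yseq ytil : ℕ → EuclideanSpace ℝ (Fin n))
    (hx0 : x 0 ∈ Sf) (hxhat0 : xhat 0 = x 0) (hytil0 : ytil 0 ∈ Sg)
    (hyup : ∀ k, yseq (k + 1) ∈ Sg ∧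
      IsMaxOn (fun z => ⟪K (xhat k), z⟫ - gstar z - β k / 2 * ‖z - ydot‖ ^ 2) Sg
        (yseq (k + 1)))
    (hxup : ∀ k, x (k + 1) ∈ Sf ∧
      IsMinOn (fun z => f z + ⟪(ContinuousLinearMap.adjoint K) (yseq (k + 1)), z⟫ +
        L k / 2 * ‖z - xhat k‖ ^ 2) Sf (x (k + 1)))
    (hxhat : ∀ k, xhat (k + 1) = x (k + 1) + η (k + 1) • (x (k + 1) - x k))
    (hytil : ∀ k, ytil (k + 1) = (1 - τ k) • ytil k + τ k • yseq (k + 1))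
    -- the suprema appearing in the bound are finite
    (hXb : BddAbove ((fun x' => ‖x 0 - x'‖ ^ 2) '' X))
    (hYb : BddAbove ((fun y' => ‖ydot - y'‖ ^ 2) '' Y)) :
    ∀ k : ℕ, 1 ≤ k → ∀ xt ∈ X, ∀ yt ∈ Y,
      (f (x k) + ⟪K (x k), yt⟫ - gstar yt) - (f xt + ⟪K xt, ytil k⟫ - gstar (ytil k)) ≤
        2 * ‖K‖ ^ 2 / (β 0 * ((k : ℝ) + 1) ^ 2) * sSup ((fun x' => ‖x 0 - x'‖ ^ 2) '' X) +
        10 * β 0 / (((k : ℝ) + 3) ^ 2) * sSup ((fun y' => ‖ydot - y'‖ ^ 2) '' Y) :=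
  stmt7_general f Sf gstar Sg K μf hμf hf hgstar X Y hXSf hYSg τ β L η hτ0 hτ hβ0 hβ0' hβ hL hη ydot
    x xhat yseq ytil hx0 hxhat0 hytil0 hyup hxup hxhat hytil hXb hYb
end

section
/- Let g* be μ_{g*}-strongly convex with μ_{g*} ≥ 0, β > 0, and ẏ ∈ ℝ^n. Then u ↦ g_β(u, ẏ) is convex on ℝ^n, and for all u, û ∈ dom g: g_β(û, ẏ) + ⟨y*_β(û, ẏ), u − û⟩ ≤ g_β(u, ẏ) − ((β + μ_{g*})/2)‖y*_β(û, ẏ) − y*_β(u, ẏ)‖²; in particular ∇_u g_β(u, ẏ) = y*_β(u, ẏ) and u ↦ g_β(u, ẏ) has 1/(β + μ_{g*})-Lipschitz continuous gradient. -/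
/-!
Put `ψ z = g* z + (β/2)‖z - ẏ‖²`. It is `(β + μ)`-strongly convex, so `z ↦ ⟪u, z⟫ - ψ z` is
strongly concave and its maximiser `y*(u)` beats every other point `z` of the domain by at least
`((β + μ)/2)‖z - y*(u)‖²`. Taking `z = y*(û)` gives the key inequality: `y*(û)` is a subgradient of
`g_β` at `û`, with a quadratic margin. Adding the key inequality to itself with `u` and `û`
swapped gives `(β + μ)‖y*(u) - y*(û)‖² ≤ ⟪y*(u) - y*(û), u - û⟫`, hence the Lipschitz bound.
Finally, a function with a subgradient at every point is convex, and it is differentiable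
wherever that subgradient is continuous.
-/

open RealInnerProductSpace Set Filter Topology

variable {E : Type*} [NormedAddCommGroup E] [InnerProductSpace ℝ E]

section StrongConvexity

variable {s : Set E} {m : ℝ} {f : E → ℝ}

lemma StrongConcaveOn.add_sq_le_of_isMaxOn {x y : E} (hf : StrongConcaveOn s m f) (hx : x ∈ s)
    (hmax : IsMaxOn f s x) (hy : y ∈ s) : f y + m / 2 * ‖y - x‖ ^ 2 ≤ f x := by
  have hsegment : ∀ t ∈ Ioo (0 : ℝ) 1, f y + (1 - t) * (m / 2 * ‖y - x‖ ^ 2) ≤ f x := by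
    rintro t ⟨ht0, ht1⟩
    have hconc := hf.2 hx hy (sub_nonneg.2 ht1.le) ht0.le (sub_add_cancel 1 t)
    have hle : f ((1 - t) • x + t • y) ≤ f x :=
      hmax (hf.1 hx hy (sub_nonneg.2 ht1.le) ht0.le (sub_add_cancel 1 t))
    rw [norm_sub_rev] at hconc
    simp only [smul_eq_mul] at hconc
    have : t * (f y + (1 - t) * (m / 2 * ‖y - x‖ ^ 2)) ≤ t * f x := by nlinarith
    exact le_of_mul_le_mul_left this ht0
  have hlim : Tendsto (fun t : ℝ => f y + (1 - t) * (m / 2 * ‖y - x‖ ^ 2)) (𝓝[>] 0)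
      (𝓝 (f y + (1 - 0) * (m / 2 * ‖y - x‖ ^ 2))) :=
    ((continuous_const.add ((continuous_const.sub continuous_id).mul continuous_const)).tendsto
      0).mono_left nhdsWithin_le_nhds
  simpa using le_of_tendsto hlim (eventually_of_mem (Ioo_mem_nhdsGT one_pos) hsegment)

lemma StrongConvexOn.add_half_mul_norm_sub_sq (hf : StrongConvexOn s m f) (β : ℝ) (c : E) :
    StrongConvexOn s (β + m) (fun z => f z + β / 2 * ‖z - c‖ ^ 2) := by
  rw [strongConvexOn_iff_convex] at hf ⊢
  have haffine : ConvexOn ℝ s (fun z => ⟪-(β • c), z⟫ + β / 2 * ‖c‖ ^ 2) :=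
    ((innerₛₗ ℝ (-(β • c))).convexOn hf.1).add (convexOn_const _ hf.1)
  refine (hf.add haffine).congr fun z _ => ?_
  simp only [Pi.add_apply, norm_sub_sq_real, inner_neg_left, real_inner_smul_left,
    real_inner_comm c z]
  ring

lemma StrongConvexOn.strongConcaveOn_inner_sub (hf : StrongConvexOn s m f) (u : E) :
    StrongConcaveOn s m (fun z => ⟪u, z⟫ - f z) := by
  refine ⟨hf.1, fun x hx y hy a b ha hb hab => ?_⟩
  have := hf.2 hx hy ha hb hab
  simp only [smul_eq_mul, inner_add_right, real_inner_smul_right] at this ⊢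
  linarith

lemma add_inner_add_sq_le_of_isMaxOn {y : E → E} (hf : StrongConvexOn s m f)
    (hy : ∀ u, y u ∈ s ∧ IsMaxOn (fun z => ⟪u, z⟫ - f z) s (y u)) (u v : E) :
    (⟪u, y u⟫ - f (y u)) + ⟪y u, v - u⟫ + m / 2 * ‖y u - y v‖ ^ 2 ≤ ⟪v, y v⟫ - f (y v) := by
  have hmax := (hf.strongConcaveOn_inner_sub v).add_sq_le_of_isMaxOn (hy v).1 (hy v).2 (hy u).1
  rw [inner_sub_right, real_inner_comm v (y u), real_inner_comm u (y u)]
  linarith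

end StrongConvexity

section Subgradient

variable {G : E → ℝ} {y : E → E}

lemma convexOn_univ_of_add_inner_le (h : ∀ u v, G u + ⟪y u, v - u⟫ ≤ G v) :
    ConvexOn ℝ univ G := by
  refine ⟨convex_univ, fun u _ v _ a b ha hb hab => ?_⟩
  set w := a • u + b • v
  have hw : a • (u - w) + b • (v - w) = 0 := by
    rw [smul_sub, smul_sub, sub_add_sub_comm, ← add_smul, hab, one_smul, sub_self]
  have hinner : a * ⟪y w, u - w⟫ + b * ⟪y w, v - w⟫ = 0 := by
    rw [← real_inner_smul_right, ← real_inner_smul_right, ← inner_add_right, hw, inner_zero_right]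
  have hu := mul_le_mul_of_nonneg_left (h w u) ha
  have hv := mul_le_mul_of_nonneg_left (h w v) hb
  simp only [smul_eq_mul]
  linear_combination hu + hv - hinner - G w * hab

lemma hasGradientAt_of_add_inner_le [CompleteSpace E] (h : ∀ u v, G u + ⟪y u, v - u⟫ ≤ G v)
    {u : E} (hy : ContinuousAt y u) : HasGradientAt G (y u) u := by
  rw [hasGradientAt_iff_isLittleO]
  have hbound : ∀ v, ‖G v - G u - ⟪y u, v - u⟫‖ ≤ ‖y v - y u‖ * ‖v - u‖ := by
    intro v
    have hlower := h u v
    have hupper := h v u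
    rw [← neg_sub v u, inner_neg_right] at hupper
    rw [Real.norm_eq_abs, abs_of_nonneg (by linarith)]
    calc G v - G u - ⟪y u, v - u⟫ ≤ ⟪y v - y u, v - u⟫ := by rw [inner_sub_left]; linarith
      _ ≤ ‖y v - y u‖ * ‖v - u‖ := real_inner_le_norm _ _
  have hsmall : (fun v => ‖y v - y u‖ * ‖v - u‖) =o[𝓝 u] (fun v => v - u) := by
    have hzero : (fun v => ‖y v - y u‖) =o[𝓝 u] (fun _ => (1 : ℝ)) :=
      (Asymptotics.isLittleO_one_iff ℝ).2 (by simpa using (tendsto_sub_nhds_zero_iff.2 hy).norm)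
    simpa using (hzero.mul_isBigO (Asymptotics.isBigO_refl (fun v => ‖v - u‖) _)).norm_right
  exact (Asymptotics.IsBigO.of_bound 1 (Eventually.of_forall fun v => by simpa using hbound v)
    ).trans_isLittleO hsmall

variable {m : ℝ}

lemma add_inner_le_of_add_inner_add_sq_le (hm : 0 ≤ m)
    (h : ∀ u v, G u + ⟪y u, v - u⟫ + m / 2 * ‖y u - y v‖ ^ 2 ≤ G v) (u v : E) :
    G u + ⟪y u, v - u⟫ ≤ G v :=
  le_of_add_le_of_nonneg_left (h u v) (by positivity)

lemma mul_norm_sub_sq_le_inner (h : ∀ u v, G u + ⟪y u, v - u⟫ + m / 2 * ‖y u - y v‖ ^ 2 ≤ G v)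
    (u v : E) : m * ‖y u - y v‖ ^ 2 ≤ ⟪y u - y v, u - v⟫ := by
  have huv := h u v
  have hvu := h v u
  rw [norm_sub_rev (y v)] at hvu
  rw [← neg_sub u v, inner_neg_right] at huv
  rw [inner_sub_left]
  linarith

lemma lipschitzWith_of_add_inner_add_sq_le (hm : 0 < m)
    (h : ∀ u v, G u + ⟪y u, v - u⟫ + m / 2 * ‖y u - y v‖ ^ 2 ≤ G v) :
    LipschitzWith (1 / m).toNNReal y := by
  refine LipschitzWith.of_dist_le_mul fun u v => ?_
  rw [dist_eq_norm, dist_eq_norm, Real.coe_toNNReal _ (by positivity), one_div_mul_eq_div,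
    le_div_iff₀ hm]
  have hcs := (mul_norm_sub_sq_le_inner h u v).trans (real_inner_le_norm _ _)
  rcases (norm_nonneg (y u - y v)).eq_or_lt with h0 | hpos
  · rw [← h0, zero_mul]
    positivity
  · nlinarith

end Subgradient

theorem stmt13_general {n : ℕ}
    (gstar : EuclideanSpace ℝ (Fin n) → ℝ) (Sg : Set (EuclideanSpace ℝ (Fin n)))
    (μg : ℝ) (hμg : 0 ≤ μg)
    -- `g*` is `μ_{g*}`-strongly convex
    (hgstar : ConvexOn ℝ Sg (fun y => gstar y - μg / 2 * ‖y‖ ^ 2))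
    (β : ℝ) (hβ : 0 < β)
    (ydot : EuclideanSpace ℝ (Fin n))
    -- `y*_β(u, ẏ)` is the (unique) maximizer defining `g_β(u, ẏ)`
    (ystar : EuclideanSpace ℝ (Fin n) → EuclideanSpace ℝ (Fin n))
    (hystar : ∀ u, ystar u ∈ Sg ∧
      IsMaxOn (fun z => ⟪u, z⟫ - gstar z - β / 2 * ‖z - ydot‖ ^ 2) Sg (ystar u)) :
    -- `u ↦ g_β(u, ẏ)` is convex on `ℝ^n`
    ConvexOn ℝ univ
      (fun u => ⟪u, ystar u⟫ - gstar (ystar u) - β / 2 * ‖ystar u - ydot‖ ^ 2) ∧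
    -- the key inequality (eq:key_bound_apdx1)
    (∀ u uhat : EuclideanSpace ℝ (Fin n),
      (⟪uhat, ystar uhat⟫ - gstar (ystar uhat) - β / 2 * ‖ystar uhat - ydot‖ ^ 2) +
          ⟪ystar uhat, u - uhat⟫ ≤
        (⟪u, ystar u⟫ - gstar (ystar u) - β / 2 * ‖ystar u - ydot‖ ^ 2) -
          (β + μg) / 2 * ‖ystar uhat - ystar u‖ ^ 2) ∧
    -- `∇_u g_β(u, ẏ) = y*_β(u, ẏ)`
    (∀ u : EuclideanSpace ℝ (Fin n),
      HasGradientAt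
        (fun v => ⟪v, ystar v⟫ - gstar (ystar v) - β / 2 * ‖ystar v - ydot‖ ^ 2)
        (ystar u) u) ∧
    -- the gradient is `1/(β+μ_{g*})`-Lipschitz continuous
    LipschitzWith (Real.toNNReal (1 / (β + μg))) ystar := by
  simp only [sub_sub] at hystar ⊢
  have hβμ : 0 < β + μg := by positivity
  have hψ : StrongConvexOn Sg (β + μg) (fun z => gstar z + β / 2 * ‖z - ydot‖ ^ 2) :=
    (strongConvexOn_iff_convex.2 hgstar).add_half_mul_norm_sub_sq β ydot
  have hkey := add_inner_add_sq_le_of_isMaxOn hψ hystar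
  have hsub := add_inner_le_of_add_inner_add_sq_le hβμ.le hkey
  have hlip := lipschitzWith_of_add_inner_add_sq_le hβμ hkey
  exact ⟨convexOn_univ_of_add_inner_le hsub, fun u uhat => by linarith [hkey uhat u],
    fun u => hasGradientAt_of_add_inner_le hsub hlip.continuous.continuousAt, hlip⟩

/-- Lemma 4(a): with `g*` `μ_{g*}`-strongly convex (`μ_{g*} ≥ 0`)
and `β > 0`, the smoothed function `u ↦ g_β(u, ẏ)` is convex on `ℝ^n`, it satisfies
`g_β(û, ẏ) + ⟪y*_β(û, ẏ), u - û⟫ ≤ g_β(u, ẏ) - ((β+μ_{g*})/2)‖y*_β(û, ẏ) - y*_β(u, ẏ)‖²`,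
its gradient at `u` is `y*_β(u, ẏ)`, and the gradient map is
`1/(β+μ_{g*})`-Lipschitz continuous. -/
theorem stmt13 {n : ℕ}
    (gstar : EuclideanSpace ℝ (Fin n) → ℝ) (Sg : Set (EuclideanSpace ℝ (Fin n)))
    (hSg : Convex ℝ Sg) (hSgc : IsClosed Sg)
    (μg : ℝ) (hμg : 0 ≤ μg)
    -- `g*` is `μ_{g*}`-strongly convex
    (hgstar : ConvexOn ℝ Sg (fun y => gstar y - μg / 2 * ‖y‖ ^ 2))
    (β : ℝ) (hβ : 0 < β)
    (ydot : EuclideanSpace ℝ (Fin n))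
    -- `y*_β(u, ẏ)` is the (unique) maximizer defining `g_β(u, ẏ)`
    (ystar : EuclideanSpace ℝ (Fin n) → EuclideanSpace ℝ (Fin n))
    (hystar : ∀ u, ystar u ∈ Sg ∧
      IsMaxOn (fun z => ⟪u, z⟫ - gstar z - β / 2 * ‖z - ydot‖ ^ 2) Sg (ystar u)) :
    -- `u ↦ g_β(u, ẏ)` is convex on `ℝ^n`
    ConvexOn ℝ univ
      (fun u => ⟪u, ystar u⟫ - gstar (ystar u) - β / 2 * ‖ystar u - ydot‖ ^ 2) ∧
    -- the key inequality (eq:key_bound_apdx1)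
    (∀ u uhat : EuclideanSpace ℝ (Fin n),
      (⟪uhat, ystar uhat⟫ - gstar (ystar uhat) - β / 2 * ‖ystar uhat - ydot‖ ^ 2) +
          ⟪ystar uhat, u - uhat⟫ ≤
        (⟪u, ystar u⟫ - gstar (ystar u) - β / 2 * ‖ystar u - ydot‖ ^ 2) -
          (β + μg) / 2 * ‖ystar uhat - ystar u‖ ^ 2) ∧
    -- `∇_u g_β(u, ẏ) = y*_β(u, ẏ)`
    (∀ u : EuclideanSpace ℝ (Fin n),
      HasGradientAt
        (fun v => ⟪v, ystar v⟫ - gstar (ystar v) - β / 2 * ‖ystar v - ydot‖ ^ 2)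
        (ystar u) u) ∧
    -- the gradient is `1/(β+μ_{g*})`-Lipschitz continuous
    LipschitzWith (Real.toNNReal (1 / (β + μg))) ystar :=
  stmt13_general gstar Sg μg hμg hgstar β hβ ydot ystar hystar
end

section
/- Let β > 0, ẏ ∈ ℝ^n, and u ∈ dom g. Then g_β(u, ẏ) ≤ g(u) ≤ g_β(u, ẏ) + (β/2)[D_g(ẏ)]², where D_g(ẏ) := sup{‖y − ẏ‖ : y ∈ ∂g(u)} is the supremum of distances from ẏ to subgradients of g at u. -/
/-!
The lower bound is Fenchel–Young: every term `⟪u, z⟫ - g*(z) - (β/2)‖z - ẏ‖²` of the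
maximum is at most `g(u)`. For the upper bound, pick a subgradient `v ∈ ∂g(u)`, which exists
because the set whose supremum is `D_g(ẏ)` has a least upper bound and is therefore nonempty.
Fenchel–Young is an equality at a subgradient, so `g(u) = ⟪u, v⟫ - g*(v)`, and taking `z = v`
in the maximum gives `g(u) ≤ g_β(u, ẏ) + (β/2)‖v - ẏ‖² ≤ g_β(u, ẏ) + (β/2) D_g(ẏ)²`.
-/

open RealInnerProductSpace Set

namespace FenchelConjugate

variable {E : Type*} [NormedAddCommGroup E] [InnerProductSpace ℝ E]
  {S : Set E} {g : E → ℝ} {u v z : E} {s : ℝ}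

def IsSubgradientOn (S : Set E) (g : E → ℝ) (u v : E) : Prop :=
  ∀ w ∈ S, g u + ⟪v, w - u⟫ ≤ g w

theorem inner_sub_le_of_isLUB_conj
    (hconj : IsLUB {r : ℝ | ∃ u' ∈ S, r = ⟪z, u'⟫ - g u'} s) (hu : u ∈ S) :
    ⟪z, u⟫ - g u ≤ s :=
  hconj.1 ⟨u, hu, rfl⟩

theorem conj_le_inner_sub_of_isSubgradientOn (hv : IsSubgradientOn S g u v)
    (hconj : IsLUB {r : ℝ | ∃ u' ∈ S, r = ⟪v, u'⟫ - g u'} s) :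
    s ≤ ⟪v, u⟫ - g u := by
  refine hconj.2 ?_
  rintro r ⟨w, hw, rfl⟩
  have := hv w hw
  rw [inner_sub_right] at this
  linarith

theorem exists_isSubgradientOn_norm_sub_le {ydot : E} {D : ℝ}
    (hD : IsLUB {r : ℝ | ∃ v : E, IsSubgradientOn S g u v ∧ r = ‖v - ydot‖} D) :
    ∃ v, IsSubgradientOn S g u v ∧ ‖v - ydot‖ ≤ D := by
  obtain ⟨r, v, hv, rfl⟩ := hD.nonempty
  exact ⟨v, hv, hD.1 ⟨v, hv, rfl⟩⟩

end FenchelConjugate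

open FenchelConjugate

theorem stmt14_general {n : ℕ}
    (g : EuclideanSpace ℝ (Fin n) → ℝ) (Sgdom : Set (EuclideanSpace ℝ (Fin n)))
    -- `g*` is the Fenchel conjugate of `g`, finite on its domain `Sgstar`
    (gstar : EuclideanSpace ℝ (Fin n) → ℝ) (Sgstar : Set (EuclideanSpace ℝ (Fin n)))
    (hconj : ∀ z ∈ Sgstar,
      IsLUB {r : ℝ | ∃ u' ∈ Sgdom, r = ⟪z, u'⟫ - g u'} (gstar z))
    -- every subgradient of `g` belongs to `dom g* = Sgstar`
    (hsubdom : ∀ u' ∈ Sgdom, ∀ v : EuclideanSpace ℝ (Fin n),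
      (∀ w ∈ Sgdom, g u' + ⟪v, w - u'⟫ ≤ g w) → v ∈ Sgstar)
    (β : ℝ) (hβ : 0 < β)
    (ydot : EuclideanSpace ℝ (Fin n))
    (u : EuclideanSpace ℝ (Fin n)) (hu : u ∈ Sgdom)
    -- the smoothed value `g_β(u, ẏ)`
    (gβ : ℝ)
    (hgβ : IsGreatest
      {r : ℝ | ∃ z ∈ Sgstar, r = ⟪u, z⟫ - gstar z - β / 2 * ‖z - ydot‖ ^ 2} gβ)
    -- `D_g(ẏ) = sup{‖y - ẏ‖ : y ∈ ∂g(u)}`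
    (Dg : ℝ)
    (hDg : IsLUB {r : ℝ | ∃ v : EuclideanSpace ℝ (Fin n),
      (∀ w ∈ Sgdom, g u + ⟪v, w - u⟫ ≤ g w) ∧ r = ‖v - ydot‖} Dg) :
    gβ ≤ g u ∧ g u ≤ gβ + β / 2 * Dg ^ 2 := by
  obtain ⟨⟨z, hz, rfl⟩, hmax⟩ := hgβ
  obtain ⟨v, hv, hvD⟩ := exists_isSubgradientOn_norm_sub_le hDg
  have hvS : v ∈ Sgstar := hsubdom u hu v hv
  constructor
  · have hFY := inner_sub_le_of_isLUB_conj (hconj z hz) hu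
    rw [real_inner_comm] at hFY
    have : 0 ≤ β / 2 * ‖z - ydot‖ ^ 2 := by positivity
    linarith
  · have hFY := conj_le_inner_sub_of_isSubgradientOn hv (hconj v hvS)
    have hv_le : ⟪u, v⟫ - gstar v - β / 2 * ‖v - ydot‖ ^ 2 ≤ _ := hmax ⟨v, hvS, rfl⟩
    have hdist : β / 2 * ‖v - ydot‖ ^ 2 ≤ β / 2 * Dg ^ 2 := by
      gcongr
    rw [real_inner_comm] at hv_le
    linarith

/-- Lemma 4(b): for `β > 0`, `ẏ ∈ ℝ^n`, and `u ∈ dom g`, the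
smoothed function satisfies `g_β(u, ẏ) ≤ g(u) ≤ g_β(u, ẏ) + (β/2)[D_g(ẏ)]²`, where
`D_g(ẏ) = sup{‖y - ẏ‖ : y ∈ ∂g(u)}`. -/
theorem stmt14 {n : ℕ}
    (g : EuclideanSpace ℝ (Fin n) → ℝ) (Sgdom : Set (EuclideanSpace ℝ (Fin n)))
    (hSgdom : Convex ℝ Sgdom) (hSgdomc : IsClosed Sgdom)
    (hg : ConvexOn ℝ Sgdom g) (hglsc : LowerSemicontinuousOn g Sgdom)
    -- `g*` is the Fenchel conjugate of `g`, finite on its domain `Sgstar`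
    (gstar : EuclideanSpace ℝ (Fin n) → ℝ) (Sgstar : Set (EuclideanSpace ℝ (Fin n)))
    (hconj : ∀ z ∈ Sgstar,
      IsLUB {r : ℝ | ∃ u' ∈ Sgdom, r = ⟪z, u'⟫ - g u'} (gstar z))
    -- every subgradient of `g` belongs to `dom g* = Sgstar`
    (hsubdom : ∀ u' ∈ Sgdom, ∀ v : EuclideanSpace ℝ (Fin n),
      (∀ w ∈ Sgdom, g u' + ⟪v, w - u'⟫ ≤ g w) → v ∈ Sgstar)
    (β : ℝ) (hβ : 0 < β)
    (ydot : EuclideanSpace ℝ (Fin n))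
    (u : EuclideanSpace ℝ (Fin n)) (hu : u ∈ Sgdom)
    -- the smoothed value `g_β(u, ẏ)`
    (gβ : ℝ)
    (hgβ : IsGreatest
      {r : ℝ | ∃ z ∈ Sgstar, r = ⟪u, z⟫ - gstar z - β / 2 * ‖z - ydot‖ ^ 2} gβ)
    -- `D_g(ẏ) = sup{‖y - ẏ‖ : y ∈ ∂g(u)}`
    (Dg : ℝ)
    (hDg : IsLUB {r : ℝ | ∃ v : EuclideanSpace ℝ (Fin n),
      (∀ w ∈ Sgdom, g u + ⟪v, w - u⟫ ≤ g w) ∧ r = ‖v - ydot‖} Dg) :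
    gβ ≤ g u ∧ g u ≤ gβ + β / 2 * Dg ^ 2 :=
  stmt14_general g Sgdom gstar Sgstar hconj hsubdom β hβ ydot u hu gβ hgβ Dg hDg
end

section
/- Let u ∈ dom g and ẏ ∈ ℝ^n. Then β ↦ g_β(u, ẏ) is convex on (0, ∞), and for all β̂ ≥ β > 0: g_β(u, ẏ) ≤ g_β̂(u, ẏ) + ((β̂ − β)/2)‖y*_β(u, ẏ) − ẏ‖². -/
open RealInnerProductSpace Set

/-! For each `y`, the objective `⟪u, y⟫ - g*(y) - (β/2)‖y - ẏ‖²` is affine in `β`, so `β ↦ g_β(u, ẏ)`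
is a pointwise maximum of affine functions, hence convex. Evaluating the objective of `g_β̂` at the
maximizer `y*_β` gives the comparison inequality. -/

theorem convexOn_of_affine_le_of_attained {α : Type*} {s : Set ℝ} {S : Set α} {a c : α → ℝ}
    {f : ℝ → ℝ} {y : ℝ → α} (hs : Convex ℝ s) (hle : ∀ b ∈ s, ∀ z ∈ S, a z - b * c z ≤ f b)
    (hattained : ∀ b ∈ s, y b ∈ S ∧ f b = a (y b) - b * c (y b)) :
    ConvexOn ℝ s f := by
  refine ⟨hs, fun b₁ hb₁ b₂ hb₂ t₁ t₂ ht₁ ht₂ ht => ?_⟩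
  set m := t₁ • b₁ + t₂ • b₂
  obtain ⟨hym, hfm⟩ := hattained m (hs hb₁ hb₂ ht₁ ht₂ ht)
  have h₁ := mul_le_mul_of_nonneg_left (hle b₁ hb₁ (y m) hym) ht₁
  have h₂ := mul_le_mul_of_nonneg_left (hle b₂ hb₂ (y m) hym) ht₂
  calc f m = t₁ * (a (y m) - b₁ * c (y m)) + t₂ * (a (y m) - b₂ * c (y m)) := by
        rw [hfm]
        simp only [m, smul_eq_mul]
        linear_combination -a (y m) * ht
    _ ≤ t₁ • f b₁ + t₂ • f b₂ := by
        simp only [smul_eq_mul]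
        linarith

theorem stmt15_general {n : ℕ}
    (gstar : EuclideanSpace ℝ (Fin n) → ℝ) (Sg : Set (EuclideanSpace ℝ (Fin n)))
    (ydot : EuclideanSpace ℝ (Fin n))
    (u : EuclideanSpace ℝ (Fin n))
    -- `gb b = g_b(u, ẏ)` with maximizer `ystar b = y*_b(u, ẏ)`, for every `b > 0`
    (gb : ℝ → ℝ) (ystar : ℝ → EuclideanSpace ℝ (Fin n))
    (hmax : ∀ b : ℝ, 0 < b → ystar b ∈ Sg ∧
      IsMaxOn (fun z => ⟪u, z⟫ - gstar z - b / 2 * ‖z - ydot‖ ^ 2) Sg (ystar b) ∧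
      gb b = ⟪u, ystar b⟫ - gstar (ystar b) - b / 2 * ‖ystar b - ydot‖ ^ 2) :
    ConvexOn ℝ (Ioi (0 : ℝ)) gb ∧
    ∀ b bhat : ℝ, 0 < b → b ≤ bhat →
      gb b ≤ gb bhat + (bhat - b) / 2 * ‖ystar b - ydot‖ ^ 2 := by
  have hle : ∀ b ∈ Ioi (0 : ℝ), ∀ z ∈ Sg,
      (⟪u, z⟫ - gstar z) - b * (‖z - ydot‖ ^ 2 / 2) ≤ gb b := by
    intro b hb z hz
    obtain ⟨-, hmaxb, hgb⟩ := hmax b hb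
    have := isMaxOn_iff.mp hmaxb z hz
    linarith
  refine ⟨convexOn_of_affine_le_of_attained (y := ystar) (convex_Ioi 0) hle fun b hb => ?_, ?_⟩
  · obtain ⟨hmem, -, hgb⟩ := hmax b hb
    exact ⟨hmem, by linarith⟩
  · intro b bhat hb hbhat
    obtain ⟨hmem, -, hgb⟩ := hmax b hb
    have := hle bhat (hb.trans_le hbhat) (ystar b) hmem
    linarith

/-- Lemma 4(c): for fixed `u ∈ dom g` and `ẏ ∈ ℝ^n`, the map
`β ↦ g_β(u, ẏ)` is convex on `(0, ∞)`, and for all `β̂ ≥ β > 0`,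
`g_β(u, ẏ) ≤ g_β̂(u, ẏ) + ((β̂ - β)/2)‖y*_β(u, ẏ) - ẏ‖²`. -/
theorem stmt15 {n : ℕ}
    (gstar : EuclideanSpace ℝ (Fin n) → ℝ) (Sg : Set (EuclideanSpace ℝ (Fin n)))
    (hSg : Convex ℝ Sg) (hSgc : IsClosed Sg)
    (hgstar : ConvexOn ℝ Sg gstar)
    (ydot : EuclideanSpace ℝ (Fin n))
    (u : EuclideanSpace ℝ (Fin n))
    -- `gb b = g_b(u, ẏ)` with maximizer `ystar b = y*_b(u, ẏ)`, for every `b > 0`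
    (gb : ℝ → ℝ) (ystar : ℝ → EuclideanSpace ℝ (Fin n))
    (hmax : ∀ b : ℝ, 0 < b → ystar b ∈ Sg ∧
      IsMaxOn (fun z => ⟪u, z⟫ - gstar z - b / 2 * ‖z - ydot‖ ^ 2) Sg (ystar b) ∧
      gb b = ⟪u, ystar b⟫ - gstar (ystar b) - b / 2 * ‖ystar b - ydot‖ ^ 2) :
    ConvexOn ℝ (Ioi (0 : ℝ)) gb ∧
    ∀ b bhat : ℝ, 0 < b → b ≤ bhat →
      gb b ≤ gb bhat + (bhat - b) / 2 * ‖ystar b - ydot‖ ^ 2 :=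
  stmt15_general gstar Sg ydot u gb ystar hmax
end

section
/- Let g* be μ_{g*}-strongly convex with μ_{g*} ≥ 0, β > 0, ẏ ∈ ℝ^n, and u, û ∈ dom g. Define ℓ_β(û, ẏ) := ⟨û, y*_β(u, ẏ)⟩ − g*(y*_β(u, ẏ)). Then: (i) g_β(u, ẏ) + ⟨y*_β(u, ẏ), û − u⟩ ≤ ℓ_β(û, ẏ) − (β/2)‖y*_β(u, ẏ) − ẏ‖²; and (ii) for every subgradient v ∈ ∂g(û), ℓ_β(û, ẏ) ≤ g(û) − (μ_{g*}/2)‖y*_β(u, ẏ) − v‖². -/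
/-!
Strong convexity of `g*` upgrades a subgradient inequality for `g*` by the quadratic term
`(μ/2)‖y - v‖²`: compare the subgradient bound at `v + t (y - v)` with the strong convexity bound
along the segment, divide by `t` and let `t → 0⁺`. If `v ∈ ∂g(û)`, then `g*(v) = ⟪v, û⟫ - g(û)` is
attained at `û`, and Fenchel–Young `g*(z) ≥ ⟪z, û⟫ - g(û)` says exactly that `û ∈ ∂g*(v)`.
Part (ii) is the strengthened subgradient inequality for `g*` at `y = y*_β(u, ẏ)`; part (i) is an
identity.
-/

open RealInnerProductSpace Set Filter Topology

variable {E : Type*} [NormedAddCommGroup E] [InnerProductSpace ℝ E]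

def IsSubgradientOn (s : Set E) (f : E → ℝ) (x v : E) : Prop :=
  ∀ w ∈ s, f x + ⟪v, w - x⟫ ≤ f w

namespace StrongConvexOn

variable {s : Set E} {m : ℝ} {f : E → ℝ} {x y v : E}

lemma inner_le_of_isSubgradientOn (hf : StrongConvexOn s m f) (hx : x ∈ s) (hy : y ∈ s)
    (hv : IsSubgradientOn s f x v) {t : ℝ} (ht₀ : 0 < t) (ht₁ : t ≤ 1) :
    ⟪v, y - x⟫ ≤ f y - f x - (1 - t) * (m / 2 * ‖y - x‖ ^ 2) := by
  have hseg : (1 - t) • x + t • y = x + t • (y - x) := by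
    rw [smul_sub, sub_smul, one_smul]; abel
  have hupper := hf.2 hx hy (sub_nonneg.mpr ht₁) ht₀.le (sub_add_cancel 1 t)
  have hlower := hv _ (hf.1 hx hy (sub_nonneg.mpr ht₁) ht₀.le (sub_add_cancel 1 t))
  rw [hseg, add_sub_cancel_left, inner_smul_right] at hlower
  rw [hseg, norm_sub_rev] at hupper
  simp only [smul_eq_mul] at hupper
  refine le_of_mul_le_mul_left ?_ ht₀
  nlinarith

lemma add_inner_add_sq_le_of_isSubgradientOn (hf : StrongConvexOn s m f) (hx : x ∈ s)
    (hy : y ∈ s) (hv : IsSubgradientOn s f x v) :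
    f x + ⟪v, y - x⟫ + m / 2 * ‖y - x‖ ^ 2 ≤ f y := by
  have hlim : Tendsto (fun t : ℝ => f y - f x - (1 - t) * (m / 2 * ‖y - x‖ ^ 2)) (𝓝[>] 0)
      (𝓝 (f y - f x - m / 2 * ‖y - x‖ ^ 2)) := by
    refine tendsto_nhdsWithin_of_tendsto_nhds <| Continuous.tendsto' ?_ 0 _ (by simp)
    fun_prop
  have hbound : ⟪v, y - x⟫ ≤ f y - f x - m / 2 * ‖y - x‖ ^ 2 :=
    ge_of_tendsto hlim <| eventually_of_mem (Ioc_mem_nhdsGT one_pos) fun t ht =>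
      hf.inner_le_of_isSubgradientOn hx hy hv ht.1 ht.2
  linarith

end StrongConvexOn

section Conjugate

variable {S : Set E} {g : E → ℝ} {x v : E} {c : ℝ}

lemma eq_of_isLUB_conjugate_of_isSubgradientOn
    (hc : IsLUB {r : ℝ | ∃ u ∈ S, r = ⟪v, u⟫ - g u} c) (hx : x ∈ S)
    (hv : IsSubgradientOn S g x v) : c = ⟪v, x⟫ - g x := by
  refine hc.unique (IsGreatest.isLUB ⟨⟨x, hx, rfl⟩, ?_⟩)
  rintro r ⟨w, hw, rfl⟩
  have := hv w hw
  rw [inner_sub_right] at this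
  linarith

lemma isSubgradientOn_conjugate {T : Set E} {gstar : E → ℝ}
    (hconj : ∀ z ∈ T, IsLUB {r : ℝ | ∃ u ∈ S, r = ⟪z, u⟫ - g u} (gstar z))
    (hx : x ∈ S) (hvT : v ∈ T) (hv : IsSubgradientOn S g x v) :
    IsSubgradientOn T gstar v x := by
  intro z hz
  have hfenchelYoung : ⟪z, x⟫ - g x ≤ gstar z := (hconj z hz).1 ⟨x, hx, rfl⟩
  rw [eq_of_isLUB_conjugate_of_isSubgradientOn (hconj v hvT) hx hv, inner_sub_right,
    real_inner_comm z x, real_inner_comm v x]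
  linarith

end Conjugate

theorem stmt16_general {n : ℕ}
    (g : EuclideanSpace ℝ (Fin n) → ℝ) (Sgdom : Set (EuclideanSpace ℝ (Fin n)))
    (gstar : EuclideanSpace ℝ (Fin n) → ℝ) (Sgstar : Set (EuclideanSpace ℝ (Fin n)))
    (μg : ℝ)
    -- `g*` is `μ_{g*}`-strongly convex
    (hgstar : ConvexOn ℝ Sgstar (fun y => gstar y - μg / 2 * ‖y‖ ^ 2))
    -- `g*` is the Fenchel conjugate of `g` (finite on its domain `Sgstar`)
    (hconj : ∀ z ∈ Sgstar,
      IsLUB {r : ℝ | ∃ u' ∈ Sgdom, r = ⟪z, u'⟫ - g u'} (gstar z))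
    -- every subgradient of `g` belongs to `dom g* = Sgstar`
    (hsubdom : ∀ u' ∈ Sgdom, ∀ v : EuclideanSpace ℝ (Fin n),
      (∀ w ∈ Sgdom, g u' + ⟪v, w - u'⟫ ≤ g w) → v ∈ Sgstar)
    (β : ℝ)
    (ydot : EuclideanSpace ℝ (Fin n))
    (u uhat : EuclideanSpace ℝ (Fin n)) (huhat : uhat ∈ Sgdom)
    -- `y*_β(u, ẏ)`, the (unique) maximizer defining `g_β(u, ẏ)`
    (ystar : EuclideanSpace ℝ (Fin n)) (hystarmem : ystar ∈ Sgstar) :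
    -- (i)
    ((⟪u, ystar⟫ - gstar ystar - β / 2 * ‖ystar - ydot‖ ^ 2) + ⟪ystar, uhat - u⟫ ≤
      (⟪uhat, ystar⟫ - gstar ystar) - β / 2 * ‖ystar - ydot‖ ^ 2) ∧
    -- (ii)
    (∀ v : EuclideanSpace ℝ (Fin n),
      (∀ w ∈ Sgdom, g uhat + ⟪v, w - uhat⟫ ≤ g w) →
      ⟪uhat, ystar⟫ - gstar ystar ≤ g uhat - μg / 2 * ‖ystar - v‖ ^ 2) := by
  refine ⟨le_of_eq ?_, fun v hv => ?_⟩
  · rw [inner_sub_right, real_inner_comm ystar, real_inner_comm ystar]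
    ring
  have hvmem : v ∈ Sgstar := hsubdom uhat huhat v hv
  have hstrong := (strongConvexOn_iff_convex.mpr hgstar).add_inner_add_sq_le_of_isSubgradientOn
    hvmem hystarmem (isSubgradientOn_conjugate hconj huhat hvmem hv)
  rw [eq_of_isLUB_conjugate_of_isSubgradientOn (hconj v hvmem) huhat hv, inner_sub_right,
    real_inner_comm v uhat] at hstrong
  linarith

/-- Lemma 4(d): with `g*` `μ_{g*}`-strongly convex (`μ_{g*} ≥ 0`),
`β > 0`, `ẏ ∈ ℝ^n`, `u, û ∈ dom g`, and `ℓ_β(û, ẏ) := ⟪û, y*_β(u, ẏ)⟫ - g*(y*_β(u, ẏ))`: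
(i) `g_β(u, ẏ) + ⟪y*_β(u, ẏ), û - u⟫ ≤ ℓ_β(û, ẏ) - (β/2)‖y*_β(u, ẏ) - ẏ‖²`, and
(ii) for every subgradient `v ∈ ∂g(û)`,
`ℓ_β(û, ẏ) ≤ g(û) - (μ_{g*}/2)‖y*_β(u, ẏ) - v‖²`. -/
theorem stmt16 {n : ℕ}
    (g : EuclideanSpace ℝ (Fin n) → ℝ) (Sgdom : Set (EuclideanSpace ℝ (Fin n)))
    (hSgdom : Convex ℝ Sgdom) (hSgdomc : IsClosed Sgdom)
    (hg : ConvexOn ℝ Sgdom g)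
    (gstar : EuclideanSpace ℝ (Fin n) → ℝ) (Sgstar : Set (EuclideanSpace ℝ (Fin n)))
    (hSgstar : Convex ℝ Sgstar)
    (μg : ℝ) (hμg : 0 ≤ μg)
    -- `g*` is `μ_{g*}`-strongly convex
    (hgstar : ConvexOn ℝ Sgstar (fun y => gstar y - μg / 2 * ‖y‖ ^ 2))
    -- `g*` is the Fenchel conjugate of `g` (finite on its domain `Sgstar`)
    (hconj : ∀ z ∈ Sgstar,
      IsLUB {r : ℝ | ∃ u' ∈ Sgdom, r = ⟪z, u'⟫ - g u'} (gstar z))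
    -- every subgradient of `g` belongs to `dom g* = Sgstar`
    (hsubdom : ∀ u' ∈ Sgdom, ∀ v : EuclideanSpace ℝ (Fin n),
      (∀ w ∈ Sgdom, g u' + ⟪v, w - u'⟫ ≤ g w) → v ∈ Sgstar)
    (β : ℝ) (hβ : 0 < β)
    (ydot : EuclideanSpace ℝ (Fin n))
    (u uhat : EuclideanSpace ℝ (Fin n)) (hu : u ∈ Sgdom) (huhat : uhat ∈ Sgdom)
    -- `y*_β(u, ẏ)`, the (unique) maximizer defining `g_β(u, ẏ)`
    (ystar : EuclideanSpace ℝ (Fin n)) (hystarmem : ystar ∈ Sgstar)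
    (hystar : IsMaxOn (fun z => ⟪u, z⟫ - gstar z - β / 2 * ‖z - ydot‖ ^ 2) Sgstar ystar) :
    -- (i)
    ((⟪u, ystar⟫ - gstar ystar - β / 2 * ‖ystar - ydot‖ ^ 2) + ⟪ystar, uhat - u⟫ ≤
      (⟪uhat, ystar⟫ - gstar ystar) - β / 2 * ‖ystar - ydot‖ ^ 2) ∧
    -- (ii)
    (∀ v : EuclideanSpace ℝ (Fin n),
      (∀ w ∈ Sgdom, g uhat + ⟪v, w - uhat⟫ ≤ g w) →
      ⟪uhat, ystar⟫ - gstar ystar ≤ g uhat - μg / 2 * ‖ystar - v‖ ^ 2) :=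
  stmt16_general g Sgdom gstar Sgstar μg hgstar hconj hsubdom β ydot u uhat huhat ystar hystarmem
end

section
/- Set τ₀ := 1 and for each k ≥ 1 consider the cubic equation τ³ + τ² + τ_{k−1}² τ − τ_{k−1}² = 0 in τ. This equation has a unique solution τ_k in (0, 1), so the sequence (τ_k) is well defined; it satisfies 1/(k+1) ≤ τ_k ≤ 2/(k+2) for all k ≥ 0, and ∏_{i=1}^{k}(1 − τ_i) ≤ 1/(k+1). Moreover, if β_k := β_{k−1}/(1 + τ_k) for a given β₀ > 0, then β_k ≤ 2β₀/(k+2). -/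
/-!
The cubic `f_a(t) = t³ + t² + a²t - a²` is strictly increasing on `[0, ∞)`, so its root there is
unique, and a sign of `f_a(x)` places the root on one side of `x`. Since `f_a(x) = x³ + x² - a²(1 - x)`,
the bounds `1/m ≤ a ≤ 2/m` on the previous term give `f_a(1/(m+1)) ≤ 0 ≤ f_a(2/(m+1))`, which
propagates `1/(k+1) ≤ τ_k ≤ 2/(k+2)` by induction. The lower bound alone then controls the product
`∏ (1 - τ_i) ≤ ∏ i/(i+1)` and each factor `1/(1 + τ_k) ≤ (k+1)/(k+2)` of `β_k`.
-/

open Set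

def tauCubic (a t : ℝ) : ℝ := t ^ 3 + t ^ 2 + a ^ 2 * t - a ^ 2

theorem tauCubic_strictMonoOn (a : ℝ) : StrictMonoOn (tauCubic a) (Ici 0) := by
  intro s hs t ht hst
  simp only [tauCubic, mem_Ici] at *
  have hfactor : 0 < t ^ 2 + t * s + s ^ 2 + t + s + a ^ 2 := by nlinarith [sq_nonneg a]
  nlinarith [mul_pos (sub_pos.2 hst) hfactor]

theorem existsUnique_tauCubic_root {a t : ℝ} (ht : t ∈ Ioo 0 1) (hroot : tauCubic a t = 0) :
    ∃! s : ℝ, s ∈ Ioo 0 1 ∧ tauCubic a s = 0 :=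
  ⟨t, ⟨ht, hroot⟩, fun _ ⟨hs, hsroot⟩ =>
    (tauCubic_strictMonoOn a).injOn (mem_Ici.2 hs.1.le) (mem_Ici.2 ht.1.le)
      (hsroot.trans hroot.symm)⟩

theorem le_of_tauCubic_nonpos {a t x : ℝ} (ht : 0 ≤ t) (hroot : tauCubic a t = 0) (hx : 0 ≤ x)
    (hfx : tauCubic a x ≤ 0) : x ≤ t :=
  ((tauCubic_strictMonoOn a).le_iff_le hx ht).1 (hroot ▸ hfx)

theorem le_of_tauCubic_nonneg {a t x : ℝ} (ht : 0 ≤ t) (hroot : tauCubic a t = 0) (hx : 0 ≤ x)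
    (hfx : 0 ≤ tauCubic a x) : t ≤ x :=
  ((tauCubic_strictMonoOn a).le_iff_le ht hx).1 (hroot ▸ hfx)

theorem tauCubic_one_div_add_one_nonpos {a m : ℝ} (hm : 0 < m) (ha : 1 / m ≤ a) :
    tauCubic a (1 / (m + 1)) ≤ 0 := by
  have ha2 : 1 ≤ a ^ 2 * m ^ 2 := by
    rw [div_le_iff₀ hm] at ha
    nlinarith
  have key : tauCubic a (1 / (m + 1)) = (m + 2 - a ^ 2 * m * (m + 1) ^ 2) / (m + 1) ^ 3 := by
    unfold tauCubic
    field_simp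
    ring
  rw [key]
  apply div_nonpos_of_nonpos_of_nonneg _ (by positivity)
  nlinarith [mul_le_mul_of_nonneg_right ha2 (by positivity : 0 ≤ (m + 1) ^ 2 / m)]

theorem tauCubic_two_div_add_one_nonneg {a m : ℝ} (hm : 0 < m) (ha₀ : 0 ≤ a) (ha : a ≤ 2 / m) :
    0 ≤ tauCubic a (2 / (m + 1)) := by
  have ha2 : a ^ 2 * m ^ 2 ≤ 4 := by
    rw [le_div_iff₀ hm] at ha
    nlinarith [mul_nonneg ha₀ hm.le]
  have key : tauCubic a (2 / (m + 1)) =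
      (4 * (m + 3) - a ^ 2 * (m - 1) * (m + 1) ^ 2) / (m + 1) ^ 3 := by
    unfold tauCubic
    field_simp
    ring
  rw [key]
  apply div_nonneg _ (by positivity)
  nlinarith [mul_le_mul_of_nonneg_right ha2 (by positivity : 0 ≤ (m + 1) ^ 2 / m ^ 2)]

theorem tau_bounds {τ : ℕ → ℝ} (h0 : τ 0 = 1)
    (hroot : ∀ k, 0 ≤ τ (k + 1) ∧ tauCubic (τ k) (τ (k + 1)) = 0) (k : ℕ) :
    1 / ((k : ℝ) + 1) ≤ τ k ∧ τ k ≤ 2 / ((k : ℝ) + 2) := by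
  induction k with
  | zero => norm_num [h0]
  | succ n ih =>
    obtain ⟨hlow, hup⟩ := ih
    obtain ⟨hpos, hcubic⟩ := hroot n
    have hτn : 0 ≤ τ n := (by positivity : (0 : ℝ) ≤ 1 / ((n : ℝ) + 1)).trans hlow
    constructor
    · push_cast
      exact le_of_tauCubic_nonpos hpos hcubic (by positivity)
        (tauCubic_one_div_add_one_nonpos (by positivity) hlow)
    · rw [show ((n + 1 : ℕ) : ℝ) + 2 = (n : ℝ) + 2 + 1 by push_cast; ring]
      exact le_of_tauCubic_nonneg hpos hcubic (by positivity)
        (tauCubic_two_div_add_one_nonneg (by positivity) hτn hup)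

theorem prod_Icc_one_sub_le_one_div {u : ℕ → ℝ} (hlow : ∀ k : ℕ, 1 / ((k : ℝ) + 1) ≤ u k)
    (hle : ∀ k, u (k + 1) ≤ 1) (k : ℕ) :
    ∏ i ∈ Finset.Icc 1 k, (1 - u i) ≤ 1 / ((k : ℝ) + 1) := by
  induction k with
  | zero => simp
  | succ n ih =>
    have hstep : 1 - u (n + 1) ≤ 1 - 1 / (((n + 1 : ℕ) : ℝ) + 1) := by linarith [hlow (n + 1)]
    rw [Finset.prod_Icc_succ_top (by omega)]
    calc (∏ i ∈ Finset.Icc 1 n, (1 - u i)) * (1 - u (n + 1))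
        ≤ 1 / ((n : ℝ) + 1) * (1 - 1 / (((n + 1 : ℕ) : ℝ) + 1)) :=
          mul_le_mul ih hstep (sub_nonneg.2 (hle n)) (by positivity)
      _ = 1 / (((n + 1 : ℕ) : ℝ) + 1) := by
          push_cast
          field_simp
          ring

theorem le_two_mul_div_of_eq_div_one_add {β u : ℕ → ℝ} (hβ0 : 0 ≤ β 0)
    (hlow : ∀ k : ℕ, 1 / ((k : ℝ) + 1) ≤ u k) (hrec : ∀ k, β (k + 1) = β k / (1 + u (k + 1)))
    (k : ℕ) : β k ≤ 2 * β 0 / ((k : ℝ) + 2) := by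
  have hu : ∀ k, 0 < u k := fun k => (by positivity : (0 : ℝ) < 1 / ((k : ℝ) + 1)).trans_le (hlow k)
  have hβ : ∀ k, 0 ≤ β k := by
    intro k
    induction k with
    | zero => exact hβ0
    | succ n ih => rw [hrec n]; exact div_nonneg ih (by linarith [hu (n + 1)])
  induction k with
  | zero => norm_num
  | succ n ih =>
    have hstep : 1 + 1 / (((n + 1 : ℕ) : ℝ) + 1) ≤ 1 + u (n + 1) := by linarith [hlow (n + 1)]
    calc β (n + 1) = β n / (1 + u (n + 1)) := hrec n
      _ ≤ β n / (1 + 1 / (((n + 1 : ℕ) : ℝ) + 1)) := div_le_div_of_nonneg_left (hβ n) (by positivity) hstep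
      _ ≤ 2 * β 0 / ((n : ℝ) + 2) / (1 + 1 / (((n + 1 : ℕ) : ℝ) + 1)) :=
          div_le_div_of_nonneg_right ih (by positivity)
      _ = 2 * β 0 / (((n + 1 : ℕ) : ℝ) + 2) := by
          push_cast
          field_simp
          ring

/-- Lemma 5(b): with `τ₀ = 1` and `τ_k` the unique root in `(0,1)`
of `τ³ + τ² + τ_{k-1}²τ - τ_{k-1}² = 0`, the sequence is well defined,
`1/(k+1) ≤ τ_k ≤ 2/(k+2)`, `∏_{i=1}^{k}(1-τ_i) ≤ 1/(k+1)`, and if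
`β_k = β_{k-1}/(1+τ_k)` with `β₀ > 0` then `β_k ≤ 2β₀/(k+2)`. -/
theorem stmt18 (τ : ℕ → ℝ) (hτ0 : τ 0 = 1)
    (hτ : ∀ k, τ (k + 1) ∈ Ioo (0 : ℝ) 1 ∧
      (τ (k + 1)) ^ 3 + (τ (k + 1)) ^ 2 + (τ k) ^ 2 * τ (k + 1) - (τ k) ^ 2 = 0)
    (β : ℕ → ℝ) (hβ0 : 0 < β 0)
    (hβrec : ∀ k, β (k + 1) = β k / (1 + τ (k + 1))) :
    -- the cubic has a unique root in `(0, 1)`, so the sequence is well defined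
    (∀ k : ℕ, ∃! t : ℝ, t ∈ Ioo (0 : ℝ) 1 ∧
      t ^ 3 + t ^ 2 + (τ k) ^ 2 * t - (τ k) ^ 2 = 0) ∧
    (∀ k : ℕ, 1 / ((k : ℝ) + 1) ≤ τ k ∧ τ k ≤ 2 / ((k : ℝ) + 2)) ∧
    (∀ k : ℕ, ∏ i ∈ Finset.Icc 1 k, (1 - τ i) ≤ 1 / ((k : ℝ) + 1)) ∧
    (∀ k : ℕ, β k ≤ 2 * β 0 / ((k : ℝ) + 2)) := by
  have hbounds := tau_bounds hτ0 fun k => ⟨(hτ k).1.1.le, (hτ k).2⟩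
  have hlow k := (hbounds k).1
  refine ⟨fun k => existsUnique_tauCubic_root (hτ k).1 (hτ k).2, hbounds,
    prod_Icc_one_sub_le_one_div hlow fun k => (hτ k).1.2.le,
    le_two_mul_div_of_eq_div_one_add hβ0.le hlow hβrec⟩
end

section
/- Given L_k, L_{k−1} > 0, μ_f > 0, and τ_k, τ_{k−1} ∈ (0, 1), set m_k := (L_k + μ_f)/(L_{k−1} + μ_f) and a_k := L_k/(L_{k−1} + μ_f). Assume (1 − τ_k)[τ_{k−1}² + m_k τ_k] ≥ a_k τ_k and m_k τ_k τ_{k−1}² + m_k² τ_k² ≥ a_k τ_{k−1}². Let x^{k−1}, x^k ∈ ℝ^p and define x̂^k := x^k + (1/ω_k)(x^k − x^{k−1}), where ω_k satisfies max{ (τ_{k−1} + √(τ_{k−1}² + 4a_k))/(2(1 − τ_{k−1})), a_k τ_k/((1 − τ_k)(1 − τ_{k−1})τ_{k−1}) } ≤ ω_k ≤ (τ_{k−1}² + m_k τ_k)/(τ_{k−1}(1 − τ_{k−1})). Then such ω_k exists (the interval is nonempty), and for every x ∈ ℝ^p: L_k τ_k² ‖(1/τ_k)[x̂^k − (1 −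 τ_k)x^k] − x‖² − μ_f τ_k (1 − τ_k)‖x^k − x‖² ≤ (1 − τ_k)(L_{k−1} + μ_f) τ_{k−1}² ‖(1/τ_{k−1})[x^k − (1 − τ_{k−1})x^{k−1}] − x‖². -/
open Set

/-!
Write `a = a_k`, `m = m_k`, `r = τ_{k-1}`, `t = τ_k`, `d = x^k - x`,
`v = (x^k - x^{k-1})/ω_k` and `y = (1 - r) ω_k`. The two vectors in the estimate are
`(t d + v)/t` and `(r d + y v)/r`, and after dividing by `L_{k-1}+μ_f` the gap between the two
sides is the quadratic form
`((1-t) r y - a t)‖d+v‖² + (1-t)(r² + m t - r y)‖d‖² + (1-t)(y² - r y - a)‖v‖²`.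
Its three coefficients are nonnegative exactly when `ω_k` satisfies the second lower bound, the
upper bound, and the root lower bound (`y` lies above the larger root of `y² - r y - a`).
The two conditions on `m` and `a` say, after clearing denominators, that both lower bounds lie
below the upper one.
-/

section InnerProduct

variable {E : Type*} [NormedAddCommGroup E] [InnerProductSpace ℝ E]

lemma norm_smul_add_smul_sq (a b : ℝ) (d v : E) :
    ‖a • d + b • v‖ ^ 2 = a ^ 2 * ‖d‖ ^ 2 + 2 * (a * b) * inner ℝ d v + b ^ 2 * ‖v‖ ^ 2 := by
  rw [norm_add_sq_real, norm_smul, norm_smul, real_inner_smul_left, real_inner_smul_right,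
    mul_pow, mul_pow, Real.norm_eq_abs, Real.norm_eq_abs, sq_abs, sq_abs]
  ring

lemma estimate_gap_eq (a m r t y : ℝ) (d v : E) :
    (1 - t) * ‖r • d + y • v‖ ^ 2 + (m - a) * t * (1 - t) * ‖d‖ ^ 2 - a * ‖t • d + v‖ ^ 2 =
      ((1 - t) * r * y - a * t) * ‖d + v‖ ^ 2 + (1 - t) * (r ^ 2 + m * t - r * y) * ‖d‖ ^ 2 +
        (1 - t) * (y ^ 2 - r * y - a) * ‖v‖ ^ 2 := by
  have hrd := norm_smul_add_smul_sq r y d v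
  have htd := norm_smul_add_smul_sq t 1 d v
  have hd := norm_smul_add_smul_sq 1 1 d v
  simp only [one_smul] at htd hd
  rw [hrd, htd, hd]
  ring

lemma mul_norm_smul_add_sq_le {a m r t y : ℝ} (d v : E) (ht : t ≤ 1)
    (hcross : a * t ≤ (1 - t) * r * y) (hupper : r * y ≤ r ^ 2 + m * t)
    (hlower : r * y + a ≤ y ^ 2) :
    a * ‖t • d + v‖ ^ 2 ≤ (1 - t) * ‖r • d + y • v‖ ^ 2 + (m - a) * t * (1 - t) * ‖d‖ ^ 2 := by
  have hgap : 0 ≤ ((1 - t) * r * y - a * t) * ‖d + v‖ ^ 2 +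
      (1 - t) * (r ^ 2 + m * t - r * y) * ‖d‖ ^ 2 + (1 - t) * (y ^ 2 - r * y - a) * ‖v‖ ^ 2 := by
    have := sub_nonneg.2 ht
    have := sub_nonneg.2 hcross
    have := sub_nonneg.2 hupper
    have : 0 ≤ y ^ 2 - r * y - a := by linarith
    positivity
  linarith [estimate_gap_eq a m r t y d v]

end InnerProduct

section Iterates

variable {E : Type*} [NormedAddCommGroup E] [NormedSpace ℝ E]

lemma sq_mul_norm_extrapolation_sub {τ : ℝ} (ω : ℝ) (hτ : τ ≠ 0) (xkm xk x : E) :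
    τ ^ 2 * ‖(1 / τ) • ((xk + (1 / ω) • (xk - xkm)) - (1 - τ) • xk) - x‖ ^ 2 =
      ‖τ • (xk - x) + (1 / ω) • (xk - xkm)‖ ^ 2 := by
  have h : τ • ((1 / τ) • ((xk + (1 / ω) • (xk - xkm)) - (1 - τ) • xk) - x) =
      τ • (xk - x) + (1 / ω) • (xk - xkm) := by
    match_scalars <;> field_simp
    ring
  rw [← h, norm_smul, mul_pow, Real.norm_eq_abs, sq_abs]

lemma sq_mul_norm_interpolation_sub {τ ω : ℝ} (hτ : τ ≠ 0) (hω : ω ≠ 0) (xkm xk x : E) :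
    τ ^ 2 * ‖(1 / τ) • (xk - (1 - τ) • xkm) - x‖ ^ 2 =
      ‖τ • (xk - x) + ((1 - τ) * ω) • ((1 / ω) • (xk - xkm))‖ ^ 2 := by
  have h : τ • ((1 / τ) • (xk - (1 - τ) • xkm) - x) =
      τ • (xk - x) + ((1 - τ) * ω) • ((1 / ω) • (xk - xkm)) := by
    match_scalars <;> field_simp
    ring
  rw [← h, norm_smul, mul_pow, Real.norm_eq_abs, sq_abs]

end Iterates

lemma mul_add_le_sq_of_root_le {b c y : ℝ} (hdisc : 0 ≤ b ^ 2 + 4 * c)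
    (hy : (b + √(b ^ 2 + 4 * c)) / 2 ≤ y) : b * y + c ≤ y ^ 2 := by
  have hs := Real.sq_sqrt hdisc
  have := Real.sqrt_nonneg (b ^ 2 + 4 * c)
  nlinarith

section StepInterval

variable {a m r t : ℝ}

lemma step_interval_nonempty (ha : 0 ≤ a) (hm : 0 ≤ m) (hr : r ∈ Ioo 0 1) (ht : t ∈ Ioo 0 1)
    (hcond1 : (1 - t) * (r ^ 2 + m * t) ≥ a * t)
    (hcond2 : m * t * r ^ 2 + m ^ 2 * t ^ 2 ≥ a * r ^ 2) :
    max ((r + √(r ^ 2 + 4 * a)) / (2 * (1 - r))) (a * t / ((1 - t) * (1 - r) * r)) ≤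
      (r ^ 2 + m * t) / (r * (1 - r)) := by
  obtain ⟨hr0, hr1⟩ := hr
  obtain ⟨ht0, ht1⟩ := ht
  have hr1' : 0 < 1 - r := by linarith
  have ht1' : 0 < 1 - t := by linarith
  refine max_le ?_ ?_
  · have hsqrt : r * √(r ^ 2 + 4 * a) ≤ r ^ 2 + 2 * m * t := by
      apply le_of_pow_le_pow_left₀ two_ne_zero (by positivity)
      rw [mul_pow, Real.sq_sqrt (by positivity)]
      nlinarith
    rw [div_le_div_iff₀ (by positivity) (by positivity)]
    nlinarith
  · rw [div_le_div_iff₀ (by positivity) (by positivity)]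
    nlinarith [mul_le_mul_of_nonneg_left (ge_iff_le.1 hcond1) (mul_pos hr0 hr1').le]

lemma step_coeffs_of_mem_interval {ω : ℝ} (ha : 0 ≤ a) (hr : r ∈ Ioo 0 1) (ht1 : t < 1)
    (hlow : max ((r + √(r ^ 2 + 4 * a)) / (2 * (1 - r))) (a * t / ((1 - t) * (1 - r) * r)) ≤ ω)
    (hup : ω ≤ (r ^ 2 + m * t) / (r * (1 - r))) :
    0 < ω ∧ a * t ≤ (1 - t) * r * ((1 - r) * ω) ∧ r * ((1 - r) * ω) ≤ r ^ 2 + m * t ∧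
      r * ((1 - r) * ω) + a ≤ ((1 - r) * ω) ^ 2 := by
  obtain ⟨hr0, hr1⟩ := hr
  have hr1' : 0 < 1 - r := by linarith
  have ht1' : 0 < 1 - t := by linarith
  obtain ⟨hroot, hcross⟩ := max_le_iff.1 hlow
  rw [div_le_iff₀ (by positivity)] at hroot hcross
  rw [le_div_iff₀ (by positivity)] at hup
  refine ⟨?_, by linarith, by linarith, mul_add_le_sq_of_root_le (by positivity) (by linarith)⟩
  nlinarith [Real.sqrt_nonneg (r ^ 2 + 4 * a)]

end StepInterval

/-- Lemma 6: under the two conditions (eq:element_cond2) on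
`m_k = (L_k+μ_f)/(L_{k-1}+μ_f)` and `a_k = L_k/(L_{k-1}+μ_f)`, the admissible interval
for `ω_k` is nonempty, and for `x̂^k = x^k + (1/ω_k)(x^k - x^{k-1})` with `ω_k` in that
interval, the estimate (eq:element_est12) holds for every `x ∈ ℝ^p`. -/
theorem stmt19 {p : ℕ}
    (Lk Lkm μf τk τkm : ℝ)
    (hLk : 0 < Lk) (hLkm : 0 < Lkm) (hμf : 0 < μf)
    (hτk : τk ∈ Ioo (0 : ℝ) 1) (hτkm : τkm ∈ Ioo (0 : ℝ) 1)
    -- condition (eq:element_cond2) with `m_k = (L_k+μ_f)/(L_{k-1}+μ_f)`,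
    -- `a_k = L_k/(L_{k-1}+μ_f)`
    (hcond1 : (1 - τk) * (τkm ^ 2 + (Lk + μf) / (Lkm + μf) * τk) ≥
      Lk / (Lkm + μf) * τk)
    (hcond2 : (Lk + μf) / (Lkm + μf) * τk * τkm ^ 2 +
      ((Lk + μf) / (Lkm + μf)) ^ 2 * τk ^ 2 ≥ Lk / (Lkm + μf) * τkm ^ 2) :
    -- the admissible interval for `ω_k` is nonempty (so `ω_k` is well defined)
    max ((τkm + Real.sqrt (τkm ^ 2 + 4 * (Lk / (Lkm + μf)))) / (2 * (1 - τkm)))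
        (Lk / (Lkm + μf) * τk / ((1 - τk) * (1 - τkm) * τkm)) ≤
      (τkm ^ 2 + (Lk + μf) / (Lkm + μf) * τk) / (τkm * (1 - τkm)) ∧
    -- the estimate (eq:element_est12)
    ∀ ωk : ℝ,
      max ((τkm + Real.sqrt (τkm ^ 2 + 4 * (Lk / (Lkm + μf)))) / (2 * (1 - τkm)))
          (Lk / (Lkm + μf) * τk / ((1 - τk) * (1 - τkm) * τkm)) ≤ ωk →
      ωk ≤ (τkm ^ 2 + (Lk + μf) / (Lkm + μf) * τk) / (τkm * (1 - τkm)) →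
      ∀ xkm xk x : EuclideanSpace ℝ (Fin p),
        Lk * τk ^ 2 *
            ‖(1 / τk) • ((xk + (1 / ωk) • (xk - xkm)) - (1 - τk) • xk) - x‖ ^ 2 -
          μf * τk * (1 - τk) * ‖xk - x‖ ^ 2 ≤
        (1 - τk) * (Lkm + μf) * τkm ^ 2 *
          ‖(1 / τkm) • (xk - (1 - τkm) • xkm) - x‖ ^ 2 := by
  obtain ⟨ht0, ht1⟩ := hτk
  have hS : 0 < Lkm + μf := by positivity
  have ha : 0 ≤ Lk / (Lkm + μf) := by positivity
  refine ⟨step_interval_nonempty ha (by positivity) hτkm ⟨ht0, ht1⟩ hcond1 hcond2, ?_⟩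
  intro ωk hlow hup xkm xk x
  obtain ⟨hω, hcross, hupper, hlower⟩ := step_coeffs_of_mem_interval ha hτkm ht1 hlow hup
  have hnormalized := mul_norm_smul_add_sq_le (xk - x) ((1 / ωk) • (xk - xkm))
    ht1.le hcross hupper hlower
  rw [← sq_mul_norm_extrapolation_sub ωk ht0.ne', ← sq_mul_norm_interpolation_sub hτkm.1.ne'
    hω.ne'] at hnormalized
  set zk := (1 / τk) • ((xk + (1 / ωk) • (xk - xkm)) - (1 - τk) • xk) - x
  set zkm := (1 / τkm) • (xk - (1 - τkm) • xkm) - x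
  have haS : (Lkm + μf) * (Lk / (Lkm + μf)) = Lk := by field_simp
  have hmaS : (Lkm + μf) * ((Lk + μf) / (Lkm + μf) - Lk / (Lkm + μf)) = μf := by
    field_simp
    ring
  set a := Lk / (Lkm + μf)
  set m := (Lk + μf) / (Lkm + μf)
  calc Lk * τk ^ 2 * ‖zk‖ ^ 2 - μf * τk * (1 - τk) * ‖xk - x‖ ^ 2
      = (Lkm + μf) * a * (τk ^ 2 * ‖zk‖ ^ 2) -
          (Lkm + μf) * (m - a) * τk * (1 - τk) * ‖xk - x‖ ^ 2 := by
        rw [haS, hmaS]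
        ring
    _ ≤ (1 - τk) * (Lkm + μf) * τkm ^ 2 * ‖zkm‖ ^ 2 := by
        linarith [mul_le_mul_of_nonneg_left hnormalized hS.le]
end
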